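/- arXiv:0912.2627 — 7 statements merged into one kernel-verified Lean document; each statement's English description precedes it below -/
import Mathlib

section
/- Fix ξ > 0 and integers 1 ≤ I < N. Let u ∈ ∏_{i=1}^{I} X_i, let E ⊆ ∏_{i=I+1}^{N} X_i, and let B ⊆ Z_u be measurable with μ(B) > (1 − ξ/128)·μ(Z_u) and μ(Z_E) > ξ/16. Define E⁰ = { v ∈ E : μ(B ∩ Z_v) > (3/4)·μ(Z_u)·μ(Z_v) }. Then μ(Z_{E⁰}) > (1/2)·μ(Z_E). -/
open MeasureTheory ENNReal Filter

/-- The coordinate space: Lean index `n` is paper index `n+1`, so this is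
`X_{n+1} = {0,1,…,5^{n+1}}`. -/
abbrev Xc (n : ℕ) : Type := Fin (5 ^ (n + 1) + 1)

/-- The weight of a point of `X_{n+1}`: `μ_{n+1}(0) = 1/2`, `μ_{n+1}(i) = 1/(2·5^{n+1})`
for `i ≠ 0`. -/
noncomputable def w (n : ℕ) (a : Xc n) : ℝ≥0∞ :=
  if a = 0 then 1 / 2 else 1 / (2 * 5 ^ (n + 1))

/-- The full product space `X = ∏_{n ≥ 1} X_n`. -/
abbrev XX : Type := (n : ℕ) → Xc n

/-- The cylinder `Z_A` determined by a set `A` of configurations on a finite set `Γ`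
of coordinates. -/
def cylSet (Γ : Finset ℕ) (A : Set ((i : Γ) → Xc i)) : Set XX :=
  {x | (fun i : Γ => x i) ∈ A}

/-- The point cylinder `Z_u`. -/
def cylPt (Γ : Finset ℕ) (u : (i : Γ) → Xc i) : Set XX := cylSet Γ {u}

/-- `μ` is the product measure `⊗ μ_n` iff every point cylinder gets the product of the
weights of its coordinates. (This property determines the product measure uniquely.) -/
def IsProductMeasure (μ : Measure XX) : Prop :=
  ∀ (Γ : Finset ℕ) (u : (i : Γ) → Xc i), μ (cylPt Γ u) = ∏ i : Γ, w i (u i)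

/-!
Write `a = μ(Z_u)` and `F = E \ E⁰`. Because the index sets `[1, I]` and `(I, N]` are disjoint, the
product structure gives `μ(Z_u ∩ Z_A) = a · μ(Z_A)` for every `A`. On each `Z_v` with `v ∈ F`, the set
`B` fills at most three quarters of `Z_u ∩ Z_v`, so subadditivity gives
`μ(B) ≤ a · μ(Z_F) · 3/4 + μ(Z_u \ Z_F) = a · (1 - μ(Z_F)/4)`. Comparing with
`μ(B) > (1 - ξ/128) · a` yields `μ(Z_F) < ξ/32 < μ(Z_E)/2`, and `Z_E ⊆ Z_{E⁰} ∪ Z_F` finishes.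
-/

lemma measurableSet_cylSet (Γ : Finset ℕ) (A : Set ((i : Γ) → Xc i)) :
    MeasurableSet (cylSet Γ A) :=
  (measurable_pi_lambda _ fun _ => measurable_pi_apply _) A.toFinite.measurableSet

lemma measurableSet_cylPt (Γ : Finset ℕ) (u : (i : Γ) → Xc i) : MeasurableSet (cylPt Γ u) :=
  measurableSet_cylSet Γ {u}

lemma inter_cylSet_eq_biUnion (S : Set XX) (Γ : Finset ℕ) (A : Set ((i : Γ) → Xc i)) :
    S ∩ cylSet Γ A = ⋃ a ∈ A.toFinite.toFinset, S ∩ cylPt Γ a := by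
  ext x
  simp [cylPt, cylSet]

lemma measure_inter_cylSet_le (μ : Measure XX) (S : Set XX) (Γ : Finset ℕ)
    (A : Set ((i : Γ) → Xc i)) :
    μ (S ∩ cylSet Γ A) ≤ ∑ a ∈ A.toFinite.toFinset, μ (S ∩ cylPt Γ a) :=
  (inter_cylSet_eq_biUnion S Γ A) ▸ measure_biUnion_finset_le _ _

lemma measure_inter_cylSet {μ : Measure XX} {S : Set XX} (hS : MeasurableSet S) (Γ : Finset ℕ)
    (A : Set ((i : Γ) → Xc i)) :
    μ (S ∩ cylSet Γ A) = ∑ a ∈ A.toFinite.toFinset, μ (S ∩ cylPt Γ a) := by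
  rw [inter_cylSet_eq_biUnion,
    measure_biUnion_finset _ fun a _ => hS.inter (measurableSet_cylPt Γ a)]
  exact fun a _ b _ hab => (Disjoint.preimage _ (Set.disjoint_singleton.mpr hab)).mono
    Set.inter_subset_right Set.inter_subset_right

lemma measure_cylSet (μ : Measure XX) (Γ : Finset ℕ) (A : Set ((i : Γ) → Xc i)) :
    μ (cylSet Γ A) = ∑ a ∈ A.toFinite.toFinset, μ (cylPt Γ a) := by
  simpa using measure_inter_cylSet (μ := μ) MeasurableSet.univ Γ A

lemma w_ne_zero (n : ℕ) (a : Xc n) : w n a ≠ 0 := by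
  unfold w; split_ifs <;> simp [ENNReal.mul_eq_top]

lemma lt_mul_four_of_one_sub_mul_lt {a f d ε : ℝ≥0∞} (ha₀ : a ≠ 0) (ha : a ≠ ⊤)
    (hsplit : a * f + d = a) (h : (1 - ε) * a < 3 / 4 * (a * f) + d) : f < ε * 4 := by
  have hd : d ≠ ⊤ := ne_top_of_le_ne_top ha (le_add_self.trans_eq hsplit)
  have haf : a * f ≠ ⊤ := ne_top_of_le_ne_top ha (le_self_add.trans_eq hsplit)
  rcases eq_or_ne ε ⊤ with rfl | hε
  · rw [ENNReal.top_mul (by norm_num)]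
    exact lt_top_iff_ne_top.mpr fun hf => haf (by rw [hf, ENNReal.mul_top ha₀])
  have hquarters : (3 : ℝ≥0∞) / 4 + 1 / 4 = 1 := by
    rw [ENNReal.div_add_div_same, ENNReal.div_eq_one_iff (by norm_num) (by norm_num)]; norm_num
  have key : 3 / 4 * (a * f) + d + 1 / 4 * (a * f) < 3 / 4 * (a * f) + d + ε * a := calc
    3 / 4 * (a * f) + d + 1 / 4 * (a * f) = a := by
      rw [add_right_comm, ← add_mul, hquarters, one_mul, hsplit]
    _ ≤ (1 - ε) * a + ε * a := by rw [← add_mul]; exact le_mul_of_one_le_left' le_tsub_add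
    _ < 3 / 4 * (a * f) + d + ε * a := ENNReal.add_lt_add_right (ENNReal.mul_ne_top hε ha) h
  rw [ENNReal.add_lt_add_iff_left (by finiteness)] at key
  rw [← ENNReal.div_lt_iff (by norm_num) (by norm_num), ← ENNReal.mul_lt_mul_iff_right ha₀ ha]
  calc a * (f / 4) = 1 / 4 * (a * f) := by rw [ENNReal.div_eq_inv_mul, one_div]; ring
    _ < ε * a := key
    _ = a * ε := mul_comm _ _

namespace IsProductMeasure

lemma isProbabilityMeasure {μ : Measure XX} (hμ : IsProductMeasure μ) : IsProbabilityMeasure μ := by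
  have h := hμ ∅ isEmptyElim
  simp only [cylPt, cylSet, Set.mem_singleton_iff,
    Subsingleton.elim _ (isEmptyElim : (i : (∅ : Finset ℕ)) → Xc i)] at h
  exact ⟨by simpa using h⟩

lemma measure_cylPt_ne_zero {μ : Measure XX} (hμ : IsProductMeasure μ)
    (Γ : Finset ℕ) (u : (i : Γ) → Xc i) : μ (cylPt Γ u) ≠ 0 := by
  rw [hμ]
  exact Finset.prod_ne_zero_iff.mpr fun i _ => w_ne_zero _ _

lemma measure_cylPt_inter_cylPt {μ : Measure XX} (hμ : IsProductMeasure μ)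
    {Γ Δ : Finset ℕ} (hΓΔ : Disjoint Γ Δ) (u : (i : Γ) → Xc i)
    (v : (i : Δ) → Xc i) :
    μ (cylPt Γ u ∩ cylPt Δ v) = μ (cylPt Γ u) * μ (cylPt Δ v) := by
  classical
  let x : XX := fun n => if h : n ∈ Γ then u ⟨n, h⟩ else if h : n ∈ Δ then v ⟨n, h⟩ else 0
  have hxu : (fun i : Γ => x i) = u := funext fun i => dif_pos i.2
  have hxv : (fun i : Δ => x i) = v := funext fun i => by
    simp [x, Finset.disjoint_right.mp hΓΔ i.2]
  have hunion : cylPt Γ u ∩ cylPt Δ v = cylPt (Γ ∪ Δ) fun i => x i := by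
    ext y
    simp [← hxu, ← hxv, cylPt, cylSet, funext_iff, or_imp, forall_and]
  rw [hunion, hμ, hμ, hμ, ← hxu, ← hxv]
  simp only [Finset.prod_coe_sort _ (fun n => w n (x n))]
  exact Finset.prod_union hΓΔ

lemma measure_cylPt_inter_cylSet {μ : Measure XX} (hμ : IsProductMeasure μ)
    {Γ Δ : Finset ℕ} (hΓΔ : Disjoint Γ Δ) (u : (i : Γ) → Xc i)
    (A : Set ((i : Δ) → Xc i)) :
    μ (cylPt Γ u ∩ cylSet Δ A) = μ (cylPt Γ u) * μ (cylSet Δ A) := by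
  rw [measure_inter_cylSet (measurableSet_cylPt Γ u), measure_cylSet, Finset.mul_sum]
  exact Finset.sum_congr rfl fun v _ => hμ.measure_cylPt_inter_cylPt hΓΔ u v

lemma measure_cylSet_lt_of_sparse {μ : Measure XX} (hμ : IsProductMeasure μ)
    {Γ Δ : Finset ℕ} (hΓΔ : Disjoint Γ Δ) (u : (i : Γ) → Xc i)
    (F : Set ((i : Δ) → Xc i)) {B : Set XX} (hBu : B ⊆ cylPt Γ u) {ε : ℝ≥0∞}
    (hB : (1 - ε) * μ (cylPt Γ u) < μ B)
    (hF : ∀ v ∈ F, μ (B ∩ cylPt Δ v) ≤ 3 / 4 * (μ (cylPt Γ u) * μ (cylPt Δ v))) :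
    μ (cylSet Δ F) < ε * 4 := by
  have := hμ.isProbabilityMeasure
  set a := μ (cylPt Γ u)
  set f := μ (cylSet Δ F)
  set d := μ (cylPt Γ u \ cylSet Δ F)
  have hsplit : a * f + d = a := by
    rw [← hμ.measure_cylPt_inter_cylSet hΓΔ, measure_inter_add_sdiff _ (measurableSet_cylSet _ _)]
  have hBF : μ (B ∩ cylSet Δ F) ≤ 3 / 4 * (a * f) := calc
    μ (B ∩ cylSet Δ F) ≤ ∑ v ∈ F.toFinite.toFinset, μ (B ∩ cylPt Δ v) :=
      measure_inter_cylSet_le μ B Δ F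
    _ ≤ ∑ v ∈ F.toFinite.toFinset, 3 / 4 * (a * μ (cylPt Δ v)) :=
      Finset.sum_le_sum fun v hv => hF v (F.toFinite.mem_toFinset.mp hv)
    _ = 3 / 4 * (a * f) := by simp only [f, measure_cylSet μ Δ F, Finset.mul_sum]
  have hBd : μ B ≤ 3 / 4 * (a * f) + d :=
    (measure_le_inter_add_sdiff μ B (cylSet Δ F)).trans
      (add_le_add hBF (measure_mono (Set.sdiff_subset_sdiff_left hBu)))
  exact lt_mul_four_of_one_sub_mul_lt (hμ.measure_cylPt_ne_zero Γ u) (measure_ne_top μ _)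
    hsplit (hB.trans_le hBd)

end IsProductMeasure

theorem statement0_general (μ : Measure XX) (hμ : IsProductMeasure μ)
    (ξ : ℝ≥0∞) (I N : ℕ)
    (u : (i : Finset.range I) → Xc i)
    (E : Set ((i : Finset.Ico I N) → Xc i))
    (B : Set XX)
    (hBu : B ⊆ cylPt (Finset.range I) u)
    (hB : (1 - ξ / 128) * μ (cylPt (Finset.range I) u) < μ B)
    (hE : ξ / 16 < μ (cylSet (Finset.Ico I N) E)) :
    1 / 2 * μ (cylSet (Finset.Ico I N) E) <
      μ (cylSet (Finset.Ico I N)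
        {v | v ∈ E ∧ 3 / 4 * (μ (cylPt (Finset.range I) u) * μ (cylPt (Finset.Ico I N) v)) <
          μ (B ∩ cylPt (Finset.Ico I N) v)}) := by
  have := hμ.isProbabilityMeasure
  have hΓΔ : Disjoint (Finset.range I) (Finset.Ico I N) := by
    simp only [Finset.disjoint_left, Finset.mem_range, Finset.mem_Ico]; omega
  set E₀ := {v | v ∈ E ∧ 3 / 4 * (μ (cylPt (Finset.range I) u) * μ (cylPt (Finset.Ico I N) v)) <
    μ (B ∩ cylPt (Finset.Ico I N) v)}
  set m := μ (cylSet (Finset.Ico I N) E)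
  have hbad : μ (cylSet (Finset.Ico I N) (E \ E₀)) < m / 2 := calc
    _ < ξ / 128 * 4 := hμ.measure_cylSet_lt_of_sparse hΓΔ u (E \ E₀) hBu hB
        fun v hv => not_lt.mp fun h => hv.2 ⟨hv.1, h⟩
    _ = ξ / 16 / 2 := by
      simp only [ENNReal.div_eq_inv_mul]
      rw [mul_right_comm, ← mul_assoc]
      congr 1
      exact (ENNReal.toReal_eq_toReal_iff' (by finiteness) (by finiteness)).mp (by simp; norm_num)
    _ < m / 2 := ENNReal.div_lt_div_right (by norm_num) (by norm_num) hE
  have hcover : m ≤ μ (cylSet (Finset.Ico I N) (E \ E₀)) + μ (cylSet (Finset.Ico I N) E₀) :=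
    (measure_mono (Set.preimage_mono (Set.subset_sdiff_union E E₀))).trans (measure_union_le _ _)
  rw [one_div, ← ENNReal.div_eq_inv_mul]
  by_contra! hle
  refine lt_irrefl m ?_
  calc m ≤ _ := hcover
    _ < m / 2 + m / 2 := ENNReal.add_lt_add_of_lt_of_le (by finiteness) hbad hle
    _ = m := ENNReal.add_halves m

theorem statement0 (μ : Measure XX) (hμ : IsProductMeasure μ)
    (ξ : ℝ≥0∞) (hξ : 0 < ξ) (I N : ℕ) (hI : 1 ≤ I) (hIN : I < N)
    (u : (i : Finset.range I) → Xc i)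
    (E : Set ((i : Finset.Ico I N) → Xc i))
    (B : Set XX) (hBmeas : MeasurableSet B)
    (hBu : B ⊆ cylPt (Finset.range I) u)
    (hB : (1 - ξ / 128) * μ (cylPt (Finset.range I) u) < μ B)
    (hE : ξ / 16 < μ (cylSet (Finset.Ico I N) E)) :
    1 / 2 * μ (cylSet (Finset.Ico I N) E) <
      μ (cylSet (Finset.Ico I N)
        {v | v ∈ E ∧ 3 / 4 * (μ (cylPt (Finset.range I) u) * μ (cylPt (Finset.Ico I N) v)) <
          μ (B ∩ cylPt (Finset.Ico I N) v)}) :=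
  statement0_general μ hμ ξ I N u E B hBu hB hE
end

section
/- Fix integers 1 ≤ I < N, a point u ∈ ∏_{i=1}^{I} X_i, and points v, w ∈ ∏_{i=I+1}^{N} X_i with ∑_{i=I+1}^{N} (π_i(v_i) − π_i(w_i)) ≡ 0 (mod 2). Define S : Z_u ∩ Z_w → X by (Sx)_i = x_i for i ≤ I and for i > N, and (Sx)_i = v_i for I+1 ≤ i ≤ N. Then: (a) S is a bijection from Z_u ∩ Z_w onto Z_u ∩ Z_v; (b) for every x ∈ Z_u ∩ Z_w, x R S(x); (c) for every measurable E ⊆ Z_u ∩ Z_w, μ(S(E)) = (μ(Z_v)/μ(Z_w))·μ(E), where μ(Z_v) = ∏_{i=I+1}^{N} μ_i(v_i) and μ(Z_w) = ∏_{i=I+1}^{N} μ_i(w_i). -/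
open MeasureTheory ENNReal Filter

/-- `π_{n+1} : X_{n+1} → {0,1}`, sending `0` to `0` and everything else to `1`. -/
def par (n : ℕ) (a : Xc n) : ℕ := if a = 0 then 0 else 1

/-- The equivalence relation `R`: `x R y` iff for some `n ≥ 1` the coordinates of `x` and `y`
beyond the `n`-th agree, and the parities of `∑_{i=1}^{n} π_i(x_i)` and
`∑_{i=1}^{n} π_i(y_i)` coincide. -/
def Rrel (x y : XX) : Prop :=
  ∃ n : ℕ, 1 ≤ n ∧ (∀ i, n ≤ i → x i = y i) ∧
    (∑ i ∈ Finset.range n, par i (x i)) % 2 = (∑ i ∈ Finset.range n, par i (y i)) % 2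

/-- The map replacing the coordinates in `Γ` by the configuration `v`. -/
def replaceOn (Γ : Finset ℕ) (v : (i : Γ) → Xc i) (x : XX) : XX :=
  fun i => if h : i ∈ Γ then v ⟨i, h⟩ else x i

-- helpers
lemma mem_cylPt {Γ : Finset ℕ} {u : (i : Γ) → Xc i} {x : XX} :
    x ∈ cylPt Γ u ↔ ∀ i (h : i ∈ Γ), x i = u ⟨i, h⟩ := by
  simp only [cylPt, cylSet, Set.mem_setOf_eq, Set.mem_singleton_iff, funext_iff]
  exact ⟨fun h i hi => h ⟨i, hi⟩, fun h i => h i.1 i.2⟩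

lemma base_ne_top (n : ℕ) : (2 * 5 ^ (n + 1) : ℝ≥0∞) ≠ ⊤ :=
  ENNReal.mul_ne_top (by simp) (ENNReal.pow_ne_top (by simp))

lemma base_ne_zero (n : ℕ) : (2 * 5 ^ (n + 1) : ℝ≥0∞) ≠ 0 := by
  simp [pow_eq_zero_iff]

lemma w_ne_top (n : ℕ) (a : Xc n) : w n a ≠ ⊤ := by
  unfold w
  split
  · simp
  · simp [ENNReal.div_eq_top, base_ne_zero n]

lemma prod_over_coe {M : Type*} [CommMonoid M] (s : Finset ℕ) (F : (i : s) → M) (g : ℕ → M)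
    (h : ∀ i (hi : i ∈ s), F ⟨i, hi⟩ = g i) : ∏ i : s, F i = ∏ i ∈ s, g i := by
  rw [← Finset.prod_attach s g, Finset.univ_eq_attach]
  exact Finset.prod_congr rfl fun i _ => h i.1 i.2

lemma sum_over_coe {M : Type*} [AddCommMonoid M] (s : Finset ℕ) (F : (i : s) → M) (g : ℕ → M)
    (h : ∀ i (hi : i ∈ s), F ⟨i, hi⟩ = g i) : ∑ i : s, F i = ∑ i ∈ s, g i := by
  rw [← Finset.sum_attach s g, Finset.univ_eq_attach]
  exact Finset.sum_congr rfl fun i _ => h i.1 i.2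

def glue (s t : Finset ℕ) (a : (i : s) → Xc i) (b : (i : t) → Xc i) :
    (i : (s ∪ t : Finset ℕ)) → Xc i :=
  fun i => if h : i.1 ∈ s then a ⟨i.1, h⟩ else
    b ⟨i.1, by have := i.2; rw [Finset.mem_union] at this; tauto⟩

lemma cyl_inter {s t : Finset ℕ} (hst : Disjoint s t) (a : (i : s) → Xc i) (b : (i : t) → Xc i) :
    cylPt s a ∩ cylPt t b = cylPt (s ∪ t) (glue s t a b) := by
  ext x
  simp only [Set.mem_inter_iff, mem_cylPt, glue]
  constructor
  · rintro ⟨h1, h2⟩ i hi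
    by_cases h : i ∈ s
    · simp [h, h1 i h]
    · have ht : i ∈ t := by rw [Finset.mem_union] at hi; tauto
      simp [h, h2 i ht]
  · intro h
    refine ⟨fun i hi => ?_, fun i hi => ?_⟩
    · have := h i (Finset.mem_union_left _ hi); simpa [hi] using this
    · have hns : i ∉ s := fun hs => (Finset.disjoint_left.mp hst hs) hi
      have := h i (Finset.mem_union_right _ hi); simpa [hns] using this

lemma prod_glue {s t : Finset ℕ} (hst : Disjoint s t) (a : (i : s) → Xc i) (b : (i : t) → Xc i) :
    ∏ i : (s ∪ t : Finset ℕ), w i (glue s t a b i) =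
      (∏ i : s, w i (a i)) * (∏ i : t, w i (b i)) := by
  classical
  set g : ℕ → ℝ≥0∞ := fun i =>
    if h : i ∈ s then w i (a ⟨i, h⟩) else if h : i ∈ t then w i (b ⟨i, h⟩) else 1 with hg
  rw [prod_over_coe (s ∪ t) _ g, prod_over_coe s _ g, prod_over_coe t _ g, Finset.prod_union hst]
  · intro i hi
    have hns : i ∉ s := fun hs => (Finset.disjoint_left.mp hst hs) hi
    simp [hg, hns, hi]
  · intro i hi; simp [hg, hi]
  · intro i hi
    by_cases h : i ∈ s <;> simp [hg, glue, h]
    have ht : i ∈ t := by rw [Finset.mem_union] at hi; tauto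
    simp [ht]

lemma measurable_replaceOn (Γ : Finset ℕ) (c : (i : Γ) → Xc i) :
    Measurable (replaceOn Γ c) := by
  apply measurable_pi_lambda
  intro i
  by_cases h : i ∈ Γ
  · simp only [replaceOn, h, dif_pos]; exact measurable_const
  · simpa [replaceOn, h] using measurable_pi_apply i

def CylSystem : Set (Set XX) := {S | ∃ Γ u, S = cylPt Γ u}

lemma isPiSystem_cyl : IsPiSystem CylSystem := by
  rintro S ⟨s, a, rfl⟩ T ⟨t, b, rfl⟩ ⟨x, hx⟩
  refine ⟨s ∪ t, glue s t a b, ?_⟩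
  ext y
  simp only [Set.mem_inter_iff, mem_cylPt, glue]
  constructor
  · rintro ⟨h1, h2⟩ i hi
    by_cases h : i ∈ s
    · simp [h, h1 i h]
    · have ht : i ∈ t := by rw [Finset.mem_union] at hi; tauto
      simp [h, h2 i ht]
  · intro h
    refine ⟨fun i hi => ?_, fun i hi => ?_⟩
    · have := h i (Finset.mem_union_left _ hi); simpa [hi] using this
    · by_cases hs : i ∈ s
      · have h1 := hx.1
        have h2 := hx.2
        rw [mem_cylPt] at h1 h2
        have := h i (Finset.mem_union_left _ hs)
        simp only [hs, dif_pos] at this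
        rw [this, ← h1 i hs, h2 i hi]
      · have := h i (Finset.mem_union_right _ hi); simpa [hs] using this

def single (i : ℕ) (a : Xc i) : (j : ({i} : Finset ℕ)) → Xc j :=
  fun j => cast (congrArg Xc (Finset.mem_singleton.mp j.2).symm) a

lemma cyl_single (i : ℕ) (a : Xc i) :
    cylPt {i} (single i a) = (fun x : XX => x i) ⁻¹' {a} := by
  ext x
  simp only [mem_cylPt, Set.mem_preimage, Set.mem_singleton_iff]
  constructor
  · intro h
    exact h i (Finset.mem_singleton_self i)
  · intro h j hj
    have hji : j = i := Finset.mem_singleton.mp hj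
    subst hji
    exact h

lemma gen_measurable_preimage (i : ℕ) (A : Set (Xc i)) :
    MeasurableSet[MeasurableSpace.generateFrom CylSystem] ((fun x : XX => x i) ⁻¹' A) := by
  have : (fun x : XX => x i) ⁻¹' A = ⋃ a ∈ A, (fun x : XX => x i) ⁻¹' {a} := by
    ext x; simp
  rw [this]
  refine MeasurableSet.biUnion (Set.to_countable A) fun a _ => ?_
  rw [← cyl_single]
  exact MeasurableSpace.measurableSet_generateFrom ⟨_, _, rfl⟩

lemma gen_eq : (inferInstance : MeasurableSpace XX) = MeasurableSpace.generateFrom CylSystem := by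
  apply le_antisymm
  · show MeasurableSpace.pi ≤ _
    refine iSup_le fun i => ?_
    intro s hs
    obtain ⟨A, -, rfl⟩ := hs
    exact gen_measurable_preimage i A
  · refine MeasurableSpace.generateFrom_le ?_
    rintro S ⟨Γ, u, rfl⟩
    exact measurableSet_cylPt Γ u

lemma cylPt_empty (f : (i : (∅ : Finset ℕ)) → Xc i) : cylPt ∅ f = Set.univ := by
  ext x
  simp only [mem_cylPt, Set.mem_univ, iff_true]
  intro i hi
  exact absurd hi (Finset.notMem_empty i)

def restrSdiff (Γ Γfix : Finset ℕ) (p : (i : Γ) → Xc i) : (i : (Γ \ Γfix : Finset ℕ)) → Xc i :=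
  fun i => p ⟨i.1, (Finset.mem_sdiff.mp i.2).1⟩

lemma preimage_replaceOn_cyl_pos (Γfix : Finset ℕ) (zc : (i : Γfix) → Xc i)
    (Γ : Finset ℕ) (p : (i : Γ) → Xc i)
    (hcomp : ∀ j (hj : j ∈ Γ) (hj' : j ∈ Γfix), zc ⟨j, hj'⟩ = p ⟨j, hj⟩) :
    replaceOn Γfix zc ⁻¹' cylPt Γ p = cylPt (Γ \ Γfix) (restrSdiff Γ Γfix p) := by
  ext x
  simp only [Set.mem_preimage, mem_cylPt, replaceOn, restrSdiff]
  constructor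
  · intro h i hi
    obtain ⟨hiΓ, hif⟩ := Finset.mem_sdiff.mp hi
    have := h i hiΓ
    simpa [hif] using this
  · intro h j hj
    by_cases hj' : j ∈ Γfix
    · simpa [hj'] using hcomp j hj hj'
    · have := h j (Finset.mem_sdiff.mpr ⟨hj, hj'⟩)
      simpa [hj'] using this

lemma preimage_replaceOn_cyl_neg (Γfix : Finset ℕ) (zc : (i : Γfix) → Xc i)
    (Γ : Finset ℕ) (p : (i : Γ) → Xc i)
    (j : ℕ) (hj : j ∈ Γ) (hj' : j ∈ Γfix) (hne : zc ⟨j, hj'⟩ ≠ p ⟨j, hj⟩) :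
    replaceOn Γfix zc ⁻¹' cylPt Γ p = ∅ := by
  ext x
  simp only [Set.mem_preimage, mem_cylPt, Set.mem_empty_iff_false, iff_false]
  intro h
  have := h j hj
  simp only [replaceOn, hj', dif_pos] at this
  exact hne this

lemma key (μ : Measure XX) (hμ : IsProductMeasure μ) (Γfix : Finset ℕ)
    (zc vc : (i : Γfix) → Xc i) (A : Set XX) (hA : MeasurableSet A) :
    (∏ i : Γfix, w i (zc i)) * μ (replaceOn Γfix zc ⁻¹' A ∩ cylPt Γfix vc) =
      (∏ i : Γfix, w i (vc i)) * μ (replaceOn Γfix zc ⁻¹' A ∩ cylPt Γfix zc) := by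
  classical
  set Wz := ∏ i : Γfix, w i (zc i) with hWz
  set Wv := ∏ i : Γfix, w i (vc i) with hWv
  have hWfin : ∀ c : (i : Γfix) → Xc i, (∏ i : Γfix, w i (c i)) ≠ ⊤ := fun c =>
    ENNReal.prod_ne_top fun i _ => w_ne_top i (c i)
  -- the two measures
  set νv : Measure XX := Measure.map (replaceOn Γfix zc) (μ.restrict (cylPt Γfix vc)) with hνv
  set νz : Measure XX := Measure.map (replaceOn Γfix zc) (μ.restrict (cylPt Γfix zc)) with hνz
  have happ : ∀ (c : (i : Γfix) → Xc i) (B : Set XX), MeasurableSet B →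
      Measure.map (replaceOn Γfix zc) (μ.restrict (cylPt Γfix c)) B =
        μ (replaceOn Γfix zc ⁻¹' B ∩ cylPt Γfix c) := by
    intro c B hB
    rw [Measure.map_apply (measurable_replaceOn _ _) hB,
      Measure.restrict_apply ((measurable_replaceOn _ _) hB)]
  -- value on cylinders
  have hcyl : ∀ (c : (i : Γfix) → Xc i) (Γ : Finset ℕ) (p : (i : Γ) → Xc i),
      Measure.map (replaceOn Γfix zc) (μ.restrict (cylPt Γfix c)) (cylPt Γ p) =
        (∏ i : Γfix, w i (c i)) *
          (if ∀ j (hj : j ∈ Γ) (hj' : j ∈ Γfix), zc ⟨j, hj'⟩ = p ⟨j, hj⟩ then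
            ∏ i : (Γ \ Γfix : Finset ℕ), w i (restrSdiff Γ Γfix p i) else 0) := by
    intro c Γ p
    rw [happ c _ (measurableSet_cylPt Γ p)]
    by_cases hcomp : ∀ j (hj : j ∈ Γ) (hj' : j ∈ Γfix), zc ⟨j, hj'⟩ = p ⟨j, hj⟩
    · rw [if_pos hcomp, preimage_replaceOn_cyl_pos Γfix zc Γ p hcomp,
        cyl_inter Finset.sdiff_disjoint, hμ, prod_glue Finset.sdiff_disjoint]
      ring
    · push_neg at hcomp
      obtain ⟨j, hj, hj', hne⟩ := hcomp
      rw [if_neg (by push_neg; exact ⟨j, hj, hj', hne⟩),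
        preimage_replaceOn_cyl_neg Γfix zc Γ p j hj hj' hne]
      simp
  -- the two scaled measures are equal
  have hfin : ∀ (a : ℝ≥0∞) (c : (i : Γfix) → Xc i), a ≠ ⊤ →
      IsFiniteMeasure (a • Measure.map (replaceOn Γfix zc) (μ.restrict (cylPt Γfix c))) := by
    intro a c ha
    constructor
    rw [Measure.smul_apply, smul_eq_mul]
    have : Measure.map (replaceOn Γfix zc) (μ.restrict (cylPt Γfix c)) Set.univ =
        (∏ i : Γfix, w i (c i)) := by
      rw [happ c _ MeasurableSet.univ]
      simp only [Set.preimage_univ, Set.univ_inter]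
      exact hμ Γfix c
    rw [this]
    exact ENNReal.mul_lt_top ha.lt_top (hWfin c).lt_top
  haveI := hfin Wz vc (hWfin zc)
  haveI := hfin Wv zc (hWfin vc)
  have hmeas : Wz • νv = Wv • νz := by
    refine ext_of_generate_finite CylSystem gen_eq isPiSystem_cyl ?_ ?_
    · rintro S ⟨Γ, p, rfl⟩
      rw [Measure.smul_apply, Measure.smul_apply, smul_eq_mul, smul_eq_mul,
        hνv, hνz, hcyl, hcyl]
      ring
    · have huniv : (Set.univ : Set XX) = cylPt ∅ (fun i => absurd i.2 (Finset.notMem_empty i.1)) :=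
        (cylPt_empty _).symm
      rw [huniv, Measure.smul_apply, Measure.smul_apply, smul_eq_mul, smul_eq_mul,
        hνv, hνz, hcyl, hcyl]
      ring
  have := congrArg (fun m : Measure XX => m A) hmeas
  simpa only [Measure.smul_apply, smul_eq_mul, hνv, hνz, happ _ _ hA] using this

lemma image_replaceOn (Γfix : Finset ℕ) (zc vc : (i : Γfix) → Xc i)
    (E : Set XX) (hE : E ⊆ cylPt Γfix zc) :
    replaceOn Γfix vc '' E = replaceOn Γfix zc ⁻¹' E ∩ cylPt Γfix vc := by
  ext y
  constructor
  · rintro ⟨x, hx, rfl⟩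
    refine ⟨?_, ?_⟩
    · have : replaceOn Γfix zc (replaceOn Γfix vc x) = x := by
        funext i
        by_cases h : i ∈ Γfix
        · simp only [replaceOn, h, dif_pos]
          exact ((mem_cylPt.mp (hE hx)) i h).symm
        · simp [replaceOn, h]
      simpa [Set.mem_preimage, this] using hx
    · rw [mem_cylPt]
      intro i hi
      simp [replaceOn, hi]
  · rintro ⟨h1, h2⟩
    refine ⟨replaceOn Γfix zc y, h1, ?_⟩
    funext i
    by_cases h : i ∈ Γfix
    · simp only [replaceOn, h, dif_pos]
      exact ((mem_cylPt.mp h2) i h).symm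
    · simp [replaceOn, h]

lemma self_eq_preimage (Γfix : Finset ℕ) (zc : (i : Γfix) → Xc i)
    (E : Set XX) (hE : E ⊆ cylPt Γfix zc) :
    E = replaceOn Γfix zc ⁻¹' E ∩ cylPt Γfix zc := by
  have := image_replaceOn Γfix zc zc E hE
  rw [← this]
  ext x
  constructor
  · intro hx
    refine ⟨x, hx, ?_⟩
    funext i
    by_cases h : i ∈ Γfix
    · simp only [replaceOn, h, dif_pos]
      exact ((mem_cylPt.mp (hE hx)) i h).symm
    · simp [replaceOn, h]
  · rintro ⟨x', hx', rfl⟩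
    have : replaceOn Γfix zc x' = x' := by
      funext i
      by_cases h : i ∈ Γfix
      · simp only [replaceOn, h, dif_pos]
        exact ((mem_cylPt.mp (hE hx')) i h).symm
      · simp [replaceOn, h]
    rwa [this]

theorem statement7 (μ : Measure XX) (hμ : IsProductMeasure μ)
    (I N : ℕ) (hI : 1 ≤ I) (hIN : I < N)
    (u : (i : Finset.range I) → Xc i) (v z : (i : Finset.Ico I N) → Xc i)
    (hpar : (∑ i : Finset.Ico I N, par i (v i)) % 2 =
      (∑ i : Finset.Ico I N, par i (z i)) % 2) :
    Set.BijOn (replaceOn (Finset.Ico I N) v)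
        (cylPt (Finset.range I) u ∩ cylPt (Finset.Ico I N) z)
        (cylPt (Finset.range I) u ∩ cylPt (Finset.Ico I N) v) ∧
      (∀ x ∈ cylPt (Finset.range I) u ∩ cylPt (Finset.Ico I N) z,
        Rrel x (replaceOn (Finset.Ico I N) v x)) ∧
      (∀ E : Set XX, MeasurableSet E →
        E ⊆ cylPt (Finset.range I) u ∩ cylPt (Finset.Ico I N) z →
        μ (replaceOn (Finset.Ico I N) v '' E) =
          (∏ i : Finset.Ico I N, w i (v i)) / (∏ i : Finset.Ico I N, w i (z i)) * μ E) := by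
  classical
  have hnotmem : ∀ i, i < I → i ∉ Finset.Ico I N := fun i hi => by
    simp [Finset.mem_Ico]; omega
  refine ⟨⟨?_, ?_, ?_⟩, ?_, ?_⟩
  -- MapsTo
  · rintro x ⟨hxu, hxz⟩
    constructor
    · rw [mem_cylPt] at hxu ⊢
      intro i hi
      have hiI : i < I := Finset.mem_range.mp hi
      simp only [replaceOn, dif_neg (hnotmem i hiI)]
      exact hxu i hi
    · rw [mem_cylPt]
      intro i hi
      simp [replaceOn, hi]
  -- InjOn
  · rintro x ⟨hxu, hxz⟩ y ⟨hyu, hyz⟩ hxy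
    funext i
    by_cases h : i ∈ (Finset.Ico I N)
    · rw [mem_cylPt] at hxz hyz
      rw [hxz i h, hyz i h]
    · have := congrFun hxy i
      simpa [replaceOn, h] using this
  -- SurjOn
  · rintro y ⟨hyu, hyv⟩
    refine ⟨replaceOn (Finset.Ico I N) z y, ⟨?_, ?_⟩, ?_⟩
    · rw [mem_cylPt] at hyu ⊢
      intro i hi
      have hiI : i < I := Finset.mem_range.mp hi
      simp only [replaceOn, dif_neg (hnotmem i hiI)]
      exact hyu i hi
    · rw [mem_cylPt]
      intro i hi
      simp [replaceOn, hi]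
    · funext i
      by_cases h : i ∈ (Finset.Ico I N)
      · simp only [replaceOn, h, dif_pos]
        exact ((mem_cylPt.mp hyv) i h).symm
      · simp [replaceOn, h]
  -- Rrel
  · rintro x ⟨hxu, hxz⟩
    refine ⟨N, by omega, fun i hi => ?_, ?_⟩
    · have : i ∉ Finset.Ico I N := by simp [Finset.mem_Ico]; omega
      simp [replaceOn, this]
    · -- parity
      set gz : ℕ → ℕ := fun i => if h : i ∈ (Finset.Ico I N) then par i (z ⟨i, h⟩) else 0 with hgz
      set gv : ℕ → ℕ := fun i => if h : i ∈ (Finset.Ico I N) then par i (v ⟨i, h⟩) else 0 with hgv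
      have hsplit : ∀ f : ℕ → ℕ, ∑ i ∈ Finset.range N, f i =
          ∑ i ∈ Finset.range I, f i + ∑ i ∈ (Finset.Ico I N), f i := by
        intro f
        simp only [Finset.range_eq_Ico]
        exact (Finset.sum_Ico_consecutive f (Nat.zero_le I) (le_of_lt hIN)).symm
      rw [hsplit, hsplit]
      have h1 : ∑ i ∈ Finset.range I, par i (replaceOn (Finset.Ico I N) v x i) =
          ∑ i ∈ Finset.range I, par i (x i) := by
        refine Finset.sum_congr rfl fun i hi => ?_
        have hiI : i < I := Finset.mem_range.mp hi
        simp [replaceOn, hnotmem i hiI]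
      have h2 : ∑ i ∈ (Finset.Ico I N), par i (x i) = ∑ i ∈ (Finset.Ico I N), gz i := by
        refine Finset.sum_congr rfl fun i hi => ?_
        rw [(mem_cylPt.mp hxz) i hi]
        obtain ⟨hi1, hi2⟩ := Finset.mem_Ico.mp hi
        simp [hgz, hi1, hi2]
      have h3 : ∑ i ∈ (Finset.Ico I N), par i (replaceOn (Finset.Ico I N) v x i) = ∑ i ∈ (Finset.Ico I N), gv i := by
        refine Finset.sum_congr rfl fun i hi => ?_
        obtain ⟨hi1, hi2⟩ := Finset.mem_Ico.mp hi
        simp [replaceOn, hi, hgv, hi1, hi2]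
      have h4 : ∑ i : (Finset.Ico I N), par i (z i) = ∑ i ∈ (Finset.Ico I N), gz i :=
        sum_over_coe (Finset.Ico I N) _ gz (fun i hi => by
          obtain ⟨hi1, hi2⟩ := Finset.mem_Ico.mp hi
          simp [hgz, hi1, hi2])
      have h5 : ∑ i : (Finset.Ico I N), par i (v i) = ∑ i ∈ (Finset.Ico I N), gv i :=
        sum_over_coe (Finset.Ico I N) _ gv (fun i hi => by
          obtain ⟨hi1, hi2⟩ := Finset.mem_Ico.mp hi
          simp [hgv, hi1, hi2])
      rw [h1, h2, h3]
      rw [h4, h5] at hpar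
      omega
  -- measure
  · intro E hE hEsub
    have hEz : E ⊆ cylPt (Finset.Ico I N) z := hEsub.trans Set.inter_subset_right
    rw [image_replaceOn (Finset.Ico I N) z v E hEz]
    have hkey := key μ hμ (Finset.Ico I N) z v E hE
    have hWz0 : (∏ i : (Finset.Ico I N), w i (z i)) ≠ 0 := by
      rw [Finset.prod_ne_zero_iff]
      exact fun i _ => w_ne_zero i (z i)
    have hWzt : (∏ i : (Finset.Ico I N), w i (z i)) ≠ ⊤ :=
      ENNReal.prod_ne_top fun i _ => w_ne_top i (z i)
    rw [← self_eq_preimage (Finset.Ico I N) z E hEz] at hkey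
    calc μ (replaceOn (Finset.Ico I N) z ⁻¹' E ∩ cylPt (Finset.Ico I N) v)
        = (∏ i : (Finset.Ico I N), w i (z i))⁻¹ *
            ((∏ i : (Finset.Ico I N), w i (z i)) * μ (replaceOn (Finset.Ico I N) z ⁻¹' E ∩ cylPt (Finset.Ico I N) v)) := by
          rw [← mul_assoc, ENNReal.inv_mul_cancel hWz0 hWzt, one_mul]
      _ = (∏ i : (Finset.Ico I N), w i (z i))⁻¹ * ((∏ i : (Finset.Ico I N), w i (v i)) * μ E) := by rw [hkey]
      _ = (∏ i : (Finset.Ico I N), w i (v i)) / (∏ i : (Finset.Ico I N), w i (z i)) * μ E := by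
          rw [div_eq_mul_inv]; ring
end

section
/- The transformation T maps G into G, and the restriction of T to G is a bijection from G onto G. -/
open MeasureTheory ENNReal Filter

/-- The conull set `G` of points with infinitely many non-maximal and infinitely many
non-zero coordinates of (paper) index `≥ 2` (Lean index `≥ 1`). -/
def G : Set XX :=
  {x | {i : ℕ | 1 ≤ i ∧ (x i : ℕ) < 5 ^ (i + 1)}.Infinite ∧
    {i : ℕ | 1 ≤ i ∧ x i ≠ 0}.Infinite}

open Classical in
/-- The transformation `T`. If `x_1 ∈ {1,2,3,4}` (Lean coordinate `0`), it increments the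
first coordinate. Otherwise (`x_1 ∈ {0,5}`), with `N(x)` the least (paper) index `≥ 2` with
`x_{N(x)} < 5^{N(x)}`, it sets the first coordinate to `a_x`, the coordinates strictly between
`1` and `N(x)` to `0`, increments the `N(x)`-th coordinate, and keeps the rest; here
`a_x ∈ {0,1}` has the parity of `π_1(x_1) + ⋯ + π_{N(x)}(x_{N(x)}) - 1`. On points where no
such `N(x)` exists (a null set), `T` is defined to be the identity. -/
noncomputable def T (x : XX) : XX :=
  if 1 ≤ (x 0 : ℕ) ∧ (x 0 : ℕ) ≤ 4 then
    Function.update x 0 (x 0 + 1)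
  else if h : ∃ i, 1 ≤ i ∧ (x i : ℕ) < 5 ^ (i + 1) then
    fun i =>
      if i = 0 then
        (⟨((∑ j ∈ Finset.range (Nat.find h + 1), par j (x j)) + 1) % 2, by
          have h2 : ((∑ j ∈ Finset.range (Nat.find h + 1), par j (x j)) + 1) % 2 < 2 :=
            Nat.mod_lt _ (by norm_num)
          have h3 : 1 ≤ 5 ^ (i + 1) := Nat.one_le_pow _ _ (by norm_num)
          omega⟩ : Xc i)
      else if i < Nat.find h then 0
      else if hiN : i = Nat.find h then
        cast (congrArg Xc hiN).symm (x (Nat.find h) + 1)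
      else x i
  else x


/-!
`T` is an adding machine on the mixed-radix coordinates `x 1, x 2, …`, with `x 0` storing the
parity of what was carried. Every point of `G` has a carry index `N`, and `T x`
agrees with `x` beyond it, so `T` preserves `G`, whose conditions only see tails. `T x`
determines `x`: `x 0 ∈ {1,…,4}` iff `T x 0 ≥ 2`; otherwise `N` is the first index `≥ 1` where
`T x` is nonzero, the coordinates below `N` are maximal, and `x 0 ∈ {0, 5}` is recovered from
the parity stored in `T x 0`. Conversely `y ∈ G` is hit by decrementing the first coordinate,
or by borrowing from the first nonzero coordinate of index `≥ 1`, with `x 0 ∈ {0, 5}` of the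
right parity.
-/

open Function

lemma val_le_five_pow {i : ℕ} (a : Xc i) : (a : ℕ) ≤ 5 ^ (i + 1) := Nat.lt_succ_iff.mp a.isLt

lemma val_add_one_of_lt_five_pow {i : ℕ} {a : Xc i} (h : (a : ℕ) < 5 ^ (i + 1)) :
    ((a + 1 : Xc i) : ℕ) = a + 1 :=
  Fin.val_add_one_of_lt (by rwa [Fin.lt_def, Fin.val_last])

lemma par_le_one (n : ℕ) (a : Xc n) : par n a ≤ 1 := by
  unfold par; split <;> omega

lemma eq_of_par_eq {a b : Xc 0} (ha : ¬(1 ≤ (a : ℕ) ∧ (a : ℕ) ≤ 4))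
    (hb : ¬(1 ≤ (b : ℕ) ∧ (b : ℕ) ≤ 4)) (h : par 0 a = par 0 b) : a = b := by
  have := val_le_five_pow a
  have := val_le_five_pow b
  simp only [par, Fin.ext_iff, Fin.val_zero] at h
  ext
  split_ifs at h <;> omega

lemma mem_G_iff_frequently (x : XX) :
    x ∈ G ↔ (∃ᶠ i in atTop, 1 ≤ i ∧ (x i : ℕ) < 5 ^ (i + 1)) ∧
      ∃ᶠ i in atTop, 1 ≤ i ∧ x i ≠ 0 := by
  simp only [G, Set.mem_ofPred_eq, Nat.frequently_atTop_iff_infinite]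

lemma mem_G_of_eventually_eq {x y : XX} (hxy : ∀ᶠ i in atTop, y i = x i) (hx : x ∈ G) :
    y ∈ G := by
  rw [mem_G_iff_frequently] at hx ⊢
  exact ⟨(hx.1.and_eventually hxy).mono fun i ⟨hi, e⟩ => by rwa [e],
    (hx.2.and_eventually hxy).mono fun i ⟨hi, e⟩ => by rwa [e]⟩

/-- `N` is the carry index `N(x)` of the paper, in the Lean indexing of `Xc`. -/
structure IsCarryIndex (x : XX) (N : ℕ) : Prop where
  one_le : 1 ≤ N
  lt_five_pow : (x N : ℕ) < 5 ^ (N + 1)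
  eq_five_pow_of_lt : ∀ i, 1 ≤ i → i < N → (x i : ℕ) = 5 ^ (i + 1)

lemma isCarryIndex_find {x : XX} (h : ∃ i, 1 ≤ i ∧ (x i : ℕ) < 5 ^ (i + 1)) :
    IsCarryIndex x (Nat.find h) where
  one_le := (Nat.find_spec h).1
  lt_five_pow := (Nat.find_spec h).2
  eq_five_pow_of_lt i hi hiN := by
    have := Nat.find_min h hiN
    have := val_le_five_pow (x i)
    omega

lemma IsCarryIndex.find_eq {x : XX} {N : ℕ} (hN : IsCarryIndex x N)
    (h : ∃ i, 1 ≤ i ∧ (x i : ℕ) < 5 ^ (i + 1)) : Nat.find h = N := by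
  refine (Nat.find_eq_iff h).2 ⟨⟨hN.one_le, hN.lt_five_pow⟩, fun i hi ⟨hi1, hlt⟩ => ?_⟩
  have := hN.eq_five_pow_of_lt i hi1 hi
  omega

lemma exists_isCarryIndex_of_mem_G {x : XX} (hx : x ∈ G) : ∃ N, IsCarryIndex x N :=
  ⟨_, isCarryIndex_find hx.1.nonempty⟩

lemma T_of_small {x : XX} (hx : 1 ≤ (x 0 : ℕ) ∧ (x 0 : ℕ) ≤ 4) :
    T x = update x 0 (x 0 + 1) := by
  unfold T; exact if_pos hx

lemma val_T_apply_zero_of_small {x : XX} (hx : 1 ≤ (x 0 : ℕ) ∧ (x 0 : ℕ) ≤ 4) :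
    (T x 0 : ℕ) = x 0 + 1 := by
  rw [T_of_small hx, update_self]
  exact val_add_one_of_lt_five_pow (by omega)

lemma T_apply_of_isCarryIndex {x : XX} {N : ℕ} (hx : ¬(1 ≤ (x 0 : ℕ) ∧ (x 0 : ℕ) ≤ 4))
    (hN : IsCarryIndex x N) :
    (T x 0 : ℕ) = (∑ j ∈ Finset.range (N + 1), par j (x j) + 1) % 2 ∧
    (∀ i, 1 ≤ i → i < N → T x i = 0) ∧
    (T x N : ℕ) = x N + 1 ∧
    (∀ i, N < i → T x i = x i) := by
  have h : ∃ i, 1 ≤ i ∧ (x i : ℕ) < 5 ^ (i + 1) := ⟨N, hN.one_le, hN.lt_five_pow⟩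
  obtain rfl := hN.find_eq h
  have hN1 := hN.one_le
  unfold T
  simp only [if_neg hx, dif_pos h]
  refine ⟨rfl, fun i hi1 hiN => ?_, ?_, fun i hi => ?_⟩
  · rw [if_neg (by omega), if_pos hiN]
  · rw [if_neg (by omega), if_neg (lt_irrefl _), dif_pos trivial, cast_eq]
    exact val_add_one_of_lt_five_pow hN.lt_five_pow
  · rw [if_neg (by omega), if_neg (by omega), dif_neg (by omega)]

lemma eventually_T_apply_eq (x : XX) : ∀ᶠ i in atTop, T x i = x i := by
  by_cases hs : 1 ≤ (x 0 : ℕ) ∧ (x 0 : ℕ) ≤ 4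
  · filter_upwards [eventually_ne_atTop 0] with i hi
    rw [T_of_small hs, update_of_ne hi]
  by_cases h : ∃ i, 1 ≤ i ∧ (x i : ℕ) < 5 ^ (i + 1)
  · filter_upwards [eventually_gt_atTop (Nat.find h)] with i hi
    exact (T_apply_of_isCarryIndex hs (isCarryIndex_find h)).2.2.2 i hi
  · unfold T
    simp [hs, h]

lemma T_mapsTo : Set.MapsTo T G G := fun x hx =>
  mem_G_of_eventually_eq (eventually_T_apply_eq x) hx

lemma two_le_val_T_apply_zero_iff {x : XX} {N : ℕ} (hN : IsCarryIndex x N) :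
    2 ≤ (T x 0 : ℕ) ↔ 1 ≤ (x 0 : ℕ) ∧ (x 0 : ℕ) ≤ 4 := by
  by_cases hs : 1 ≤ (x 0 : ℕ) ∧ (x 0 : ℕ) ≤ 4
  · rw [val_T_apply_zero_of_small hs]
    exact iff_of_true (by omega) hs
  · simp only [hs, (T_apply_of_isCarryIndex hs hN).1, iff_false, not_le]
    exact Nat.mod_lt _ two_pos

lemma carry_le_of_T_eq {x x' : XX} {N N' : ℕ} (hx : ¬(1 ≤ (x 0 : ℕ) ∧ (x 0 : ℕ) ≤ 4))
    (hx' : ¬(1 ≤ (x' 0 : ℕ) ∧ (x' 0 : ℕ) ≤ 4)) (hN : IsCarryIndex x N)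
    (hN' : IsCarryIndex x' N') (h : T x = T x') : N ≤ N' := by
  by_contra! hlt
  have hzero := (T_apply_of_isCarryIndex hx hN).2.1 N' hN'.one_le hlt
  have hsucc := (T_apply_of_isCarryIndex hx' hN').2.2.1
  rw [← h, hzero, Fin.val_zero] at hsucc
  omega

lemma eq_of_T_eq_of_small {x x' : XX} (hx : 1 ≤ (x 0 : ℕ) ∧ (x 0 : ℕ) ≤ 4)
    (hx' : 1 ≤ (x' 0 : ℕ) ∧ (x' 0 : ℕ) ≤ 4) (h : T x = T x') : x = x' := by
  rw [T_of_small hx, T_of_small hx'] at h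
  funext i
  rcases eq_or_ne i 0 with rfl | hi
  · simpa using congrFun h 0
  · simpa [update_of_ne hi] using congrFun h i

lemma eq_of_T_eq_of_not_small {x x' : XX} {N N' : ℕ}
    (hx : ¬(1 ≤ (x 0 : ℕ) ∧ (x 0 : ℕ) ≤ 4)) (hx' : ¬(1 ≤ (x' 0 : ℕ) ∧ (x' 0 : ℕ) ≤ 4))
    (hN : IsCarryIndex x N) (hN' : IsCarryIndex x' N') (h : T x = T x') : x = x' := by
  obtain rfl : N = N' :=
    (carry_le_of_T_eq hx hx' hN hN' h).antisymm (carry_le_of_T_eq hx' hx hN' hN h.symm)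
  obtain ⟨h0, -, hsucc, hgt⟩ := T_apply_of_isCarryIndex hx hN
  obtain ⟨h0', -, hsucc', hgt'⟩ := T_apply_of_isCarryIndex hx' hN'
  have hpos : ∀ i, 1 ≤ i → x i = x' i := by
    intro i hi
    rcases lt_trichotomy i N with hiN | rfl | hiN
    · ext; rw [hN.eq_five_pow_of_lt i hi hiN, hN'.eq_five_pow_of_lt i hi hiN]
    · ext; rw [h] at hsucc; omega
    · rw [← hgt i hiN, ← hgt' i hiN, h]
  have h0eq : x 0 = x' 0 := by
    refine eq_of_par_eq hx hx' ?_
    have hsum : ∑ j ∈ Finset.range N, par (j + 1) (x (j + 1)) =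
        ∑ j ∈ Finset.range N, par (j + 1) (x' (j + 1)) :=
      Finset.sum_congr rfl fun j _ => by rw [hpos (j + 1) (by omega)]
    have h0T : (T x 0 : ℕ) = T x' 0 := by rw [h]
    rw [h0, h0', Finset.sum_range_succ', Finset.sum_range_succ', hsum] at h0T
    have := par_le_one 0 (x 0)
    have := par_le_one 0 (x' 0)
    omega
  funext i
  rcases eq_or_ne i 0 with rfl | hi
  · exact h0eq
  · exact hpos i (by omega)

lemma T_injOn : Set.InjOn T G := by
  intro x hx x' hx' h
  obtain ⟨N, hN⟩ := exists_isCarryIndex_of_mem_G hx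
  obtain ⟨N', hN'⟩ := exists_isCarryIndex_of_mem_G hx'
  have hsmall := (two_le_val_T_apply_zero_iff hN).symm.trans (h ▸ two_le_val_T_apply_zero_iff hN')
  by_cases hs : 1 ≤ (x 0 : ℕ) ∧ (x 0 : ℕ) ≤ 4
  · exact eq_of_T_eq_of_small hs (hsmall.1 hs) h
  · exact eq_of_T_eq_of_not_small hs (hsmall.not.1 hs) hN hN' h

/-- The coordinates `1, 2, …` of the `T`-preimage of `y` when `M` is the first index `≥ 1`
with `y M ≠ 0` (subtracting one from `y` borrows from coordinate `M`); coordinate `0` is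
overwritten. -/
def borrow (y : XX) (M : ℕ) : XX := fun i =>
  if i < M then Fin.last _ else if i = M then y i - 1 else y i

lemma T_update_borrow {y : XX} {M : ℕ} (hM1 : 1 ≤ M) (hM : y M ≠ 0)
    (hzero : ∀ i, 1 ≤ i → i < M → y i = 0) {c : Xc 0} (hc : ¬(1 ≤ (c : ℕ) ∧ (c : ℕ) ≤ 4))
    (hpar : (par 0 c + ∑ j ∈ Finset.range M, par (j + 1) (borrow y M (j + 1)) + 1) % 2 = y 0) :
    T (update (borrow y M) 0 c) = y := by
  set x := update (borrow y M) 0 c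
  have hxi : ∀ i, i ≠ 0 → x i = borrow y M i := fun i hi => update_of_ne hi _ _
  have hyM : (y M : ℕ) ≠ 0 := fun h => hM (Fin.ext h)
  have hxM : (x M : ℕ) = y M - 1 := by
    rw [hxi M (by omega), borrow, if_neg (lt_irrefl M), if_pos rfl, Fin.coe_sub_one, if_neg hM]
  have hN : IsCarryIndex x M := by
    refine ⟨hM1, ?_, fun i hi hiM => ?_⟩
    · rw [hxM]
      exact (Nat.sub_lt_of_pos_le one_pos (Nat.pos_of_ne_zero hyM)).trans_le (val_le_five_pow _)
    · rw [hxi i (by omega), borrow, if_pos hiM, Fin.val_last]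
  have hx0 : x 0 = c := update_self _ _ _
  obtain ⟨h0, hlt, hsucc, hgt⟩ := T_apply_of_isCarryIndex (by rwa [hx0]) hN
  funext i
  rcases lt_trichotomy i M with hiM | rfl | hiM
  · rcases eq_or_ne i 0 with rfl | hi
    · ext
      rw [h0, ← hpar, Finset.sum_range_succ', hx0, add_comm _ (par 0 c)]
      simp only [hxi _ (Nat.succ_ne_zero _)]
    · rw [hlt i (by omega) hiM, hzero i (by omega) hiM]
  · ext; omega
  · rw [hgt i hiM, hxi i (by omega), borrow, if_neg (by omega), if_neg (by omega)]

lemma exists_not_small_par_eq (k : ℕ) {b : ℕ} (hb : b ≤ 1) :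
    ∃ c : Xc 0, ¬(1 ≤ (c : ℕ) ∧ (c : ℕ) ≤ 4) ∧ (par 0 c + k) % 2 = b := by
  by_cases hk : k % 2 = b
  · exact ⟨0, by simp, by simpa [par] using hk⟩
  · refine ⟨5, by decide, ?_⟩
    simp only [par, if_neg (show (5 : Xc 0) ≠ 0 by decide)]
    omega

lemma T_surjOn : Set.SurjOn T G G := by
  intro y hy
  by_cases hy0 : 2 ≤ (y 0 : ℕ)
  · have hval : ((y 0 - 1 : Xc 0) : ℕ) = y 0 - 1 := by
      rw [Fin.coe_sub_one, if_neg (fun h => by simp [h] at hy0)]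
    have hs : 1 ≤ (update y 0 (y 0 - 1) 0 : ℕ) ∧ (update y 0 (y 0 - 1) 0 : ℕ) ≤ 4 := by
      have := val_le_five_pow (y 0)
      rw [update_self, hval]
      omega
    refine ⟨update y 0 (y 0 - 1), mem_G_of_eventually_eq ?_ hy, ?_⟩
    · filter_upwards [eventually_ne_atTop 0] with i hi using update_of_ne hi _ _
    · rw [T_of_small hs, update_self, sub_add_cancel, update_idem, update_eq_self]
  · have hM : ∃ i, 1 ≤ i ∧ y i ≠ 0 := hy.2.nonempty
    set M := Nat.find hM
    have hzero : ∀ i, 1 ≤ i → i < M → y i = 0 := fun i hi hiM => by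
      simpa [hi] using Nat.find_min hM hiM
    obtain ⟨c, hc, hpar⟩ := exists_not_small_par_eq
      (∑ j ∈ Finset.range M, par (j + 1) (borrow y M (j + 1)) + 1) (b := y 0) (by omega)
    rw [← add_assoc] at hpar
    refine ⟨update (borrow y M) 0 c, mem_G_of_eventually_eq ?_ hy,
      T_update_borrow (Nat.find_spec hM).1 (Nat.find_spec hM).2 hzero hc hpar⟩
    filter_upwards [eventually_gt_atTop M] with i hi
    rw [update_of_ne (by omega), borrow, if_neg (by omega), if_neg (by omega)]

theorem statement10 : Set.MapsTo T G G ∧ Set.BijOn T G G :=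
  ⟨T_mapsTo, T_mapsTo, T_injOn, T_surjOn⟩
end

section
/- For every x ∈ G, the R-equivalence class of x coincides with the T-orbit of x: { y ∈ X : x R y } = { T^{n}(x) : n ∈ ℤ }, where T^{n} denotes the n-th iterate of the bijection T : G → G (negative n using its inverse). -/
open MeasureTheory ENNReal Filter

/-!
Inside the finite set of points that agree with `x` beyond coordinate `n` and have the same
parity of `∑_{i ≤ n} π_i(x_i)`, the map `T` acts as an odometer: unless a point is the top point
(`x_1 ∈ {0,5}` and `x_i = 5^i` for `2 ≤ i ≤ n`), `T` stays in this set and strictly increases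
the mixed-radix value `∑_{i=1}^{n} x_i ∏_{j=1}^{i-1} (5^j + 1)`. Hence all points of the set, in
particular `x` and any `y` with `x R y` at level `n`, are carried by `T` to the unique top point,
so they lie on one `T`-orbit. Conversely each step of `T` stays within an `R`-class.
-/

def parSum (z : XX) (n : ℕ) : ℕ := ∑ i ∈ Finset.range n, par i (z i)

def RrelAt (n : ℕ) (x y : XX) : Prop :=
  (∀ i, n ≤ i → x i = y i) ∧ parSum x n % 2 = parSum y n % 2

def IsTopAt (n : ℕ) (z : XX) : Prop :=
  ((z 0 : ℕ) = 0 ∨ (z 0 : ℕ) = 5) ∧ ∀ i, 1 ≤ i → i < n → (z i : ℕ) = 5 ^ (i + 1)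

def radix (n : ℕ) : ℕ := ∏ j ∈ Finset.range n, (5 ^ (j + 1) + 1)

def value (z : XX) (n : ℕ) : ℕ := ∑ i ∈ Finset.range n, radix i * (z i : ℕ)

lemma par_of_val_ne_zero {i : ℕ} {a : Xc i} (h : (a : ℕ) ≠ 0) : par i a = 1 :=
  if_neg fun h' => h (by simp [h'])

lemma par_of_val_lt_two {i : ℕ} {a : Xc i} (h : (a : ℕ) < 2) : par i a = a := by
  by_cases ha : (a : ℕ) = 0
  · simp [par, Fin.ext_iff, ha]
  · rw [par_of_val_ne_zero ha]
    omega

lemma parSum_eq_par_zero_add {z : XX} {n : ℕ} (hn : 1 ≤ n) :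
    parSum z n = par 0 (z 0) + ∑ i ∈ Finset.Ico 1 n, par i (z i) := by
  rw [parSum, Finset.range_eq_Ico, Finset.sum_eq_sum_Ico_succ_bot (by omega)]

lemma parSum_add_sum_Ico (z : XX) {m n : ℕ} (h : m ≤ n) :
    parSum z n = parSum z m + ∑ i ∈ Finset.Ico m n, par i (z i) :=
  (Finset.sum_range_add_sum_Ico _ h).symm

lemma radix_succ (n : ℕ) : radix (n + 1) = radix n * (5 ^ (n + 1) + 1) :=
  Finset.prod_range_succ _ n

lemma value_succ (z : XX) (n : ℕ) : value z (n + 1) = value z n + radix n * (z n : ℕ) :=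
  Finset.sum_range_succ _ n

lemma value_lt_radix (z : XX) (n : ℕ) : value z n < radix n := by
  induction n with
  | zero => simp [value, radix]
  | succ n ih =>
    have hz : (z n : ℕ) ≤ 5 ^ (n + 1) := Fin.is_le _
    rw [value_succ, radix_succ]
    nlinarith

lemma value_add_sum_Ico (z : XX) {m n : ℕ} (h : m ≤ n) :
    value z n = value z m + ∑ i ∈ Finset.Ico m n, radix i * (z i : ℕ) :=
  (Finset.sum_range_add_sum_Ico _ h).symm

lemma value_lt_value {a b : XX} {N n : ℕ} (hNn : N < n)
    (htail : ∀ i, N < i → i < n → a i = b i) (hN : (a N : ℕ) < b N) :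
    value a n < value b n := by
  have hsum : ∑ i ∈ Finset.Ico (N + 1) n, radix i * (a i : ℕ) =
      ∑ i ∈ Finset.Ico (N + 1) n, radix i * (b i : ℕ) :=
    Finset.sum_congr rfl fun i hi => by
      rw [Finset.mem_Ico] at hi
      rw [htail i (by omega) hi.2]
  have hlow : value a (N + 1) < value b (N + 1) := by
    rw [value_succ, value_succ]
    have ha := value_lt_radix a N
    have hmul : radix N * ((a N : ℕ) + 1) ≤ radix N * (b N : ℕ) := Nat.mul_le_mul_left _ hN
    nlinarith
  have hNn' : N + 1 ≤ n := hNn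
  rw [value_add_sum_Ico a hNn', value_add_sum_Ico b hNn', hsum]
  omega

namespace RrelAt

lemma refl (n : ℕ) (x : XX) : RrelAt n x x := ⟨fun _ _ => rfl, rfl⟩

lemma symm {n : ℕ} {x y : XX} (h : RrelAt n x y) : RrelAt n y x :=
  ⟨fun i hi => (h.1 i hi).symm, h.2.symm⟩

lemma trans {n : ℕ} {x y z : XX} (h₁ : RrelAt n x y) (h₂ : RrelAt n y z) : RrelAt n x z :=
  ⟨fun i hi => (h₁.1 i hi).trans (h₂.1 i hi), h₁.2.trans h₂.2⟩

lemma mono {m n : ℕ} {x y : XX} (h : RrelAt m x y) (hmn : m ≤ n) : RrelAt n x y := by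
  refine ⟨fun i hi => h.1 i (hmn.trans hi), ?_⟩
  have htail : ∑ i ∈ Finset.Ico m n, par i (x i) = ∑ i ∈ Finset.Ico m n, par i (y i) :=
    Finset.sum_congr rfl fun i hi => by rw [h.1 i (Finset.mem_Ico.mp hi).1]
  rw [parSum_add_sum_Ico x hmn, parSum_add_sum_Ico y hmn, htail, Nat.add_mod,
    h.2, ← Nat.add_mod]

end RrelAt

lemma rrel_iff {x y : XX} : Rrel x y ↔ ∃ n, 1 ≤ n ∧ RrelAt n x y := Iff.rfl

lemma rrel_equivalence : Equivalence Rrel where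
  refl x := ⟨1, le_rfl, RrelAt.refl 1 x⟩
  symm h := by
    obtain ⟨n, hn, h⟩ := rrel_iff.mp h
    exact rrel_iff.mpr ⟨n, hn, h.symm⟩
  trans h₁ h₂ := by
    obtain ⟨m, hm, h₁⟩ := rrel_iff.mp h₁
    obtain ⟨n, -, h₂⟩ := rrel_iff.mp h₂
    exact rrel_iff.mpr ⟨max m n, hm.trans (le_max_left m n),
      (h₁.mono (le_max_left m n)).trans (h₂.mono (le_max_right m n))⟩

lemma IsTopAt.parSum_eq {n : ℕ} {z : XX} (hz : IsTopAt n z) (hn : 1 ≤ n) :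
    parSum z n = par 0 (z 0) + (n - 1) := by
  have hmid : ∀ i ∈ Finset.Ico 1 n, par i (z i) = 1 := fun i hi => by
    rw [Finset.mem_Ico] at hi
    exact par_of_val_ne_zero (by rw [hz.2 i hi.1 hi.2]; positivity)
  rw [parSum_eq_par_zero_add hn, Finset.sum_congr rfl hmid]
  simp

lemma IsTopAt.eq {n : ℕ} {a b : XX} (ha : IsTopAt n a) (hb : IsTopAt n b) (hab : RrelAt n a b) :
    a = b := by
  funext i
  by_cases hi : n ≤ i
  · exact hab.1 i hi
  apply Fin.ext
  rcases Nat.eq_zero_or_pos i with rfl | hi0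
  · have par_top : ∀ z : XX, IsTopAt n z → par 0 (z 0) = (z 0 : ℕ) / 5 := by
      rintro z ⟨h | h, -⟩
      · rw [par_of_val_lt_two (by omega), h]
      · rw [par_of_val_ne_zero (by omega), h]
    have hpar := hab.2
    rw [ha.parSum_eq (by omega), hb.parSum_eq (by omega), par_top a ha, par_top b hb] at hpar
    rcases ha.1 with h | h <;> rcases hb.1 with h' | h' <;> omega
  · rw [ha.2 i hi0 (by omega), hb.2 i hi0 (by omega)]

lemma mem_G_of_tail_eq {z z' : XX} (hz : z ∈ G) {n : ℕ} (h : ∀ i, n ≤ i → z' i = z i) :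
    z' ∈ G := by
  have key : ∀ p : ℕ → XX → Prop, {i | 1 ≤ i ∧ p i z}.Infinite →
      (∀ i, n ≤ i → p i z → p i z') → {i | 1 ≤ i ∧ p i z'}.Infinite :=
    fun p hp himp => (hp.sdiff (Set.finite_Iio n)).mono fun i hi =>
      ⟨hi.1.1, himp i (not_lt.mp hi.2) hi.1.2⟩
  exact ⟨key (fun i x => (x i : ℕ) < 5 ^ (i + 1)) hz.1 fun i hi => by simp only [h i hi]; exact id,
    key (fun i x => x i ≠ 0) hz.2 fun i hi => by simp only [h i hi]; exact id⟩

lemma Xc.val_add_one {i : ℕ} {a : Xc i} (h : (a : ℕ) < 5 ^ (i + 1)) :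
    ((a + 1 : Xc i) : ℕ) = (a : ℕ) + 1 :=
  Fin.val_add_one_of_lt (Fin.lt_def.mpr h)

lemma T_of_incr {z : XX} (h : 1 ≤ (z 0 : ℕ) ∧ (z 0 : ℕ) ≤ 4) :
    T z = Function.update z 0 (z 0 + 1) :=
  if_pos h

lemma T_of_carry {z : XX} (hz0 : ¬(1 ≤ (z 0 : ℕ) ∧ (z 0 : ℕ) ≤ 4)) {N : ℕ} (hN1 : 1 ≤ N)
    (hN : (z N : ℕ) < 5 ^ (N + 1)) (hmax : ∀ i, 1 ≤ i → i < N → 5 ^ (i + 1) ≤ (z i : ℕ)) :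
    (T z 0 : ℕ) = (parSum z (N + 1) + 1) % 2 ∧ (∀ i, 1 ≤ i → i < N → T z i = 0) ∧
      (T z N : ℕ) = (z N : ℕ) + 1 ∧ ∀ i, N < i → T z i = z i := by
  have h : ∃ i, 1 ≤ i ∧ (z i : ℕ) < 5 ^ (i + 1) := ⟨N, hN1, hN⟩
  obtain rfl : Nat.find h = N := (Nat.find_eq_iff h).2
    ⟨⟨hN1, hN⟩, fun m hm hm' => (hmax m hm'.1 hm).not_gt hm'.2⟩
  unfold T
  rw [if_neg hz0, dif_pos h]
  refine ⟨rfl, fun i hi1 hi => ?_, ?_, fun i hi => ?_⟩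
  · simp only [if_neg (show i ≠ 0 by omega), if_pos hi]
  · simp only [if_neg (show Nat.find h ≠ 0 by omega), lt_irrefl, if_false, dif_pos, cast_eq]
    exact Xc.val_add_one hN
  · simp only [if_neg (show i ≠ 0 by omega), if_neg (show ¬i < Nat.find h by omega),
      dif_neg (show i ≠ Nat.find h by omega)]

lemma rrelAt_T_of_incr {z : XX} (h : 1 ≤ (z 0 : ℕ) ∧ (z 0 : ℕ) ≤ 4) : RrelAt 1 z (T z) := by
  rw [T_of_incr h]
  refine ⟨fun i hi => (Function.update_of_ne (by omega) _ z).symm, ?_⟩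
  have hval : ((z 0 + 1 : Xc 0) : ℕ) = (z 0 : ℕ) + 1 := Xc.val_add_one (by omega)
  simp only [parSum, Finset.sum_range_one, Function.update_self]
  rw [par_of_val_ne_zero (by omega), par_of_val_ne_zero (by omega)]

lemma rrelAt_T_of_carry {z : XX} (hz0 : ¬(1 ≤ (z 0 : ℕ) ∧ (z 0 : ℕ) ≤ 4)) {N : ℕ}
    (hN1 : 1 ≤ N) (hN : (z N : ℕ) < 5 ^ (N + 1))
    (hmax : ∀ i, 1 ≤ i → i < N → 5 ^ (i + 1) ≤ (z i : ℕ)) : RrelAt (N + 1) z (T z) := by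
  obtain ⟨h0, hmid, hNval, htail⟩ := T_of_carry hz0 hN1 hN hmax
  refine ⟨fun i hi => (htail i hi).symm, ?_⟩
  have hmid' : ∑ i ∈ Finset.Ico 1 N, par i (T z i) = 0 :=
    Finset.sum_eq_zero fun i hi => by
      rw [hmid i (Finset.mem_Ico.mp hi).1 (Finset.mem_Ico.mp hi).2]
      simp [par]
  have hsum : parSum (T z) (N + 1) = (parSum z (N + 1) + 1) % 2 + 1 := by
    rw [parSum_eq_par_zero_add (by omega), Finset.sum_Ico_succ_top hN1, hmid',
      par_of_val_lt_two (by omega), h0, par_of_val_ne_zero (by omega)]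
  omega

lemma exists_least_carry {z : XX} {n : ℕ} (h : ∃ i, 1 ≤ i ∧ i < n ∧ (z i : ℕ) < 5 ^ (i + 1)) :
    ∃ N, 1 ≤ N ∧ N < n ∧ (z N : ℕ) < 5 ^ (N + 1) ∧
      ∀ i, 1 ≤ i → i < N → 5 ^ (i + 1) ≤ (z i : ℕ) := by
  classical
  obtain ⟨hN1, hNn, hN⟩ := Nat.find_spec h
  refine ⟨Nat.find h, hN1, hNn, hN, fun i hi1 hi => ?_⟩
  have := Nat.find_min h hi
  simp only [not_and, not_lt] at this
  exact this hi1 (hi.trans hNn)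

lemma rrel_T {z : XX} (hz : z ∈ G) : Rrel z (T z) := by
  by_cases hz0 : 1 ≤ (z 0 : ℕ) ∧ (z 0 : ℕ) ≤ 4
  · exact ⟨1, le_rfl, rrelAt_T_of_incr hz0⟩
  · obtain ⟨i, hi1, hi⟩ := hz.1.nonempty
    obtain ⟨N, hN1, -, hN, hmax⟩ := exists_least_carry ⟨i, hi1, Nat.lt_succ_self i, hi⟩
    exact ⟨N + 1, by omega, rrelAt_T_of_carry hz0 hN1 hN hmax⟩

lemma rrelAt_T_and_value_lt_of_not_isTopAt {n : ℕ} {z : XX} (hn : 1 ≤ n)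
    (hz : ¬IsTopAt n z) : RrelAt n z (T z) ∧ value z n < value (T z) n := by
  by_cases hz0 : 1 ≤ (z 0 : ℕ) ∧ (z 0 : ℕ) ≤ 4
  · refine ⟨(rrelAt_T_of_incr hz0).mono hn, value_lt_value hn (fun i hi _ => ?_) ?_⟩
    · rw [T_of_incr hz0, Function.update_of_ne (by omega)]
    · rw [T_of_incr hz0, Function.update_self, Xc.val_add_one (by omega)]
      omega
  · have hcarry : ∃ i, 1 ≤ i ∧ i < n ∧ (z i : ℕ) < 5 ^ (i + 1) := by
      by_contra! hmax
      refine hz ⟨by have := (z 0).is_le; omega, fun i hi1 hi => ?_⟩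
      have := (z i).is_le
      have := hmax i hi1 hi
      omega
    obtain ⟨N, hN1, hNn, hN, hmax⟩ := exists_least_carry hcarry
    obtain ⟨-, -, hNval, htail⟩ := T_of_carry hz0 hN1 hN hmax
    exact ⟨(rrelAt_T_of_carry hz0 hN1 hN hmax).mono hNn,
      value_lt_value hNn (fun i hi _ => (htail i hi).symm) (by omega)⟩

lemma exists_iterate_isTopAt {n : ℕ} (hn : 1 ≤ n) (z : XX) :
    ∃ j, IsTopAt n (T^[j] z) ∧ RrelAt n z (T^[j] z) := by
  induction h : radix n - value z n using Nat.strong_induction_on generalizing z with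
  | _ k ih =>
    by_cases hz : IsTopAt n z
    · exact ⟨0, hz, RrelAt.refl n z⟩
    obtain ⟨hrel, hlt⟩ := rrelAt_T_and_value_lt_of_not_isTopAt hn hz
    have := value_lt_radix (T z) n
    obtain ⟨j, htop, hrel'⟩ := ih _ (by omega) (T z) rfl
    exact ⟨j + 1, htop, hrel.trans hrel'⟩

lemma coe_pow_apply_eq_iterate {α : Type*} {s : Set α} {f : α → α} (e : Equiv.Perm s)
    (he : ∀ g : s, (e g : α) = f g) (g : s) (j : ℕ) : ((e ^ j) g : α) = f^[j] g := by
  induction j with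
  | zero => rfl
  | succ j ih => rw [pow_succ', Equiv.Perm.mul_apply, he, ih, Function.iterate_succ_apply']

lemma Equivalence.rel_zpow_apply {α : Type*} {s : Set α} {r : α → α → Prop} (hr : Equivalence r)
    (e : Equiv.Perm s) (he : ∀ g : s, r g (e g)) (g : s) (k : ℤ) : r g ((e ^ k) g) := by
  have hpow : ∀ (g : s) (j : ℕ), r g ((e ^ j) g) := fun g j => by
    induction j with
    | zero => exact hr.refl _
    | succ j ih => exact hr.trans ih (by rw [pow_succ', Equiv.Perm.mul_apply]; exact he _)
  obtain ⟨j, rfl | rfl⟩ := Int.eq_nat_or_neg k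
  · exact_mod_cast hpow g j
  · have hback : (e ^ j) ((e ^ (-(j : ℤ))) g) = g := by
      rw [zpow_neg, zpow_natCast, ← Equiv.Perm.eq_inv_iff_eq]
    have := hpow ((e ^ (-(j : ℤ))) g) j
    rw [hback] at this
    exact hr.symm this

theorem statement13 (e : Equiv.Perm G) (he : ∀ g : G, ((e g : G) : XX) = T (g : XX))
    (x : G) :
    {y : XX | Rrel (x : XX) y} = Set.range (fun n : ℤ => (((e ^ n) x : G) : XX)) := by
  ext y
  constructor
  · intro hxy
    obtain ⟨n, hn, hxy⟩ := rrel_iff.mp hxy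
    have hyG : y ∈ G := mem_G_of_tail_eq x.2 fun i hi => (hxy.1 i hi).symm
    obtain ⟨jx, hxtop, hx⟩ := exists_iterate_isTopAt hn (x : XX)
    obtain ⟨jy, hytop, hy⟩ := exists_iterate_isTopAt hn y
    have hmeet : (e ^ jx) x = (e ^ jy) ⟨y, hyG⟩ := Subtype.ext <| by
      rw [coe_pow_apply_eq_iterate e he, coe_pow_apply_eq_iterate e he]
      exact hxtop.eq hytop (hx.symm.trans (hxy.trans hy))
    refine ⟨-jy + jx, ?_⟩
    show ((e ^ (-(jy : ℤ) + jx)) x : XX) = y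
    rw [zpow_add, zpow_neg, zpow_natCast, zpow_natCast, Equiv.Perm.mul_apply, hmeet,
      Equiv.Perm.inv_eq_iff_eq.mpr rfl]
  · rintro ⟨k, rfl⟩
    exact rrel_equivalence.rel_zpow_apply e (fun g => by rw [he]; exact rrel_T g.2) x k
end

section
/- The equivalence relation R is ergodic with respect to μ: if A ⊆ X is measurable and R-invariant (i.e. whenever x ∈ A and x R y, then y ∈ A), then μ(A) = 0 or μ(X ∖ A) = 0. -/
/-!
Suppose `A` and its complement both have positive measure. Approximating by cylinder sets, each
has relative density at least `7/8` in some cylinder of a common level `N`. Refining by one more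
coordinate, chosen so that the two cylinders get the same parity, keeps both densities at least
`3/4`, since every coordinate gives mass `1/2` to each parity class. For an `R`-invariant set,
overwriting the first `n` coordinates by those of a point of the same parity maps `A` into itself,
and by the product structure this transports the relative density of `A` from one level-`n`
cylinder to the other. So `A` would have density both `≥ 3/4` and `≤ 1/4` in the same cylinder.
-/

open MeasureTheory ENNReal Filter

namespace ParityRelation

open Finset (range)
open Function (update)
open scoped symmDiff

def cylOf (Γ : Finset ℕ) (x : XX) : Set XX := {y | ∀ i ∈ Γ, y i = x i}

lemma mem_cylOf {Γ : Finset ℕ} {x y : XX} : y ∈ cylOf Γ x ↔ ∀ i ∈ Γ, y i = x i :=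
  Iff.rfl

lemma cylOf_congr {Γ : Finset ℕ} {x y : XX} (h : ∀ i ∈ Γ, x i = y i) :
    cylOf Γ x = cylOf Γ y :=
  Set.ext fun _ => forall₂_congr fun i hi => by rw [h i hi]

lemma cylPt_restrict (Γ : Finset ℕ) (x : XX) : cylPt Γ (fun i => x i) = cylOf Γ x := by
  ext y
  simp only [cylPt, cylSet, Set.mem_ofPred_eq, Set.mem_singleton_iff, funext_iff, Subtype.forall,
    mem_cylOf]

lemma cylPt_eq_cylOf_of_mem {Γ : Finset ℕ} {c : (i : Γ) → Xc i} {z : XX}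
    (hz : z ∈ cylPt Γ c) :
    cylPt Γ c = cylOf Γ z := by
  rw [← cylPt_restrict]
  exact congrArg (cylPt Γ) (Set.mem_singleton_iff.1 hz).symm

lemma measurableSet_cylSet (Γ : Finset ℕ) (S : Set ((i : Γ) → Xc i)) :
    MeasurableSet (cylSet Γ S) :=
  (Set.toFinite S).measurableSet.cylinder Γ

lemma measurableSet_cylPt (Γ : Finset ℕ) (c : (i : Γ) → Xc i) : MeasurableSet (cylPt Γ c) :=
  measurableSet_cylSet Γ {c}

lemma measurableSet_cylOf (Γ : Finset ℕ) (x : XX) : MeasurableSet (cylOf Γ x) :=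
  cylPt_restrict Γ x ▸ measurableSet_cylSet Γ _

lemma iUnion_cylPt (Γ : Finset ℕ) : ⋃ c : (i : Γ) → Xc i, cylPt Γ c = Set.univ :=
  Set.eq_univ_of_forall fun z => Set.mem_iUnion.2 ⟨fun i => z i, rfl⟩

lemma pairwise_disjoint_cylPt (Γ : Finset ℕ) :
    Pairwise fun c c' : (i : Γ) → Xc i => Disjoint (cylPt Γ c) (cylPt Γ c') := fun _ _ h =>
  Set.disjoint_singleton.2 h |>.preimage _

lemma measure_eq_sum_inter_cylPt (μ : Measure XX) (Γ : Finset ℕ) {S : Set XX}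
    (hS : MeasurableSet S) : μ S = ∑ c : (i : Γ) → Xc i, μ (S ∩ cylPt Γ c) := by
  conv_lhs => rw [← Set.inter_univ S, ← iUnion_cylPt Γ, Set.inter_iUnion]
  rw [measure_iUnion (fun c c' h => (pairwise_disjoint_cylPt Γ h).mono
      Set.inter_subset_right Set.inter_subset_right)
    fun c => hS.inter (measurableSet_cylPt Γ c), tsum_fintype]

lemma ext_of_cylPt {ν₁ ν₂ : Measure XX} [IsFiniteMeasure ν₁]
    (h : ∀ (Γ : Finset ℕ) (c : (i : Γ) → Xc i), ν₁ (cylPt Γ c) = ν₂ (cylPt Γ c)) :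
    ν₁ = ν₂ := by
  refine ext_of_generate_finite _ generateFrom_measurableCylinders.symm
    isPiSystem_measurableCylinders (fun s hs => ?_) ?_
  · obtain ⟨Γ, S, -, rfl⟩ := (mem_measurableCylinders s).1 hs
    change ν₁ (cylSet Γ S) = ν₂ (cylSet Γ S)
    rw [measure_eq_sum_inter_cylPt ν₁ Γ (measurableSet_cylSet Γ S),
      measure_eq_sum_inter_cylPt ν₂ Γ (measurableSet_cylSet Γ S)]
    refine Finset.sum_congr rfl fun c _ => ?_
    by_cases hc : c ∈ S
    · rw [Set.inter_eq_right.2 fun z hz => show (fun i : Γ => z i) ∈ S from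
        (Set.mem_singleton_iff.1 hz) ▸ hc, h]
    · rw [Set.eq_empty_of_forall_notMem fun z (hz : z ∈ cylSet Γ S ∩ cylPt Γ c) =>
        hc ((Set.mem_singleton_iff.1 hz.2) ▸ hz.1), measure_empty, measure_empty]
  · have huniv : cylPt ∅ isEmptyElim = Set.univ :=
      Set.eq_univ_of_forall fun z => Set.mem_singleton_iff.2 (Subsingleton.elim _ _)
    rw [← huniv, h]

lemma w_ne_zero (n : ℕ) (a : Xc n) : w n a ≠ 0 := by
  unfold w; split_ifs <;> simp [ENNReal.mul_ne_top]

lemma w_ne_top (n : ℕ) (a : Xc n) : w n a ≠ ⊤ := by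
  unfold w; split_ifs <;> simp

variable {μ : Measure XX}

lemma measure_cylOf (hμ : IsProductMeasure μ) (Γ : Finset ℕ) (x : XX) :
    μ (cylOf Γ x) = ∏ i ∈ Γ, w i (x i) := by
  rw [← cylPt_restrict, hμ, Finset.prod_coe_sort Γ fun i => w i (x i)]

lemma measure_cylOf_ne_zero (hμ : IsProductMeasure μ) (Γ : Finset ℕ) (x : XX) :
    μ (cylOf Γ x) ≠ 0 := by
  rw [measure_cylOf hμ]
  exact Finset.prod_ne_zero_iff.2 fun i _ => w_ne_zero i (x i)

lemma measure_cylOf_ne_top (hμ : IsProductMeasure μ) (Γ : Finset ℕ) (x : XX) :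
    μ (cylOf Γ x) ≠ ⊤ := by
  rw [measure_cylOf hμ]
  exact ENNReal.prod_ne_top fun i _ => w_ne_top i (x i)

lemma isProbabilityMeasure (hμ : IsProductMeasure μ) : IsProbabilityMeasure μ :=
  ⟨by simpa [cylOf] using measure_cylOf hμ ∅ 0⟩

lemma measure_cylOf_inter_of_disjoint (hμ : IsProductMeasure μ) {Γ₁ Γ₂ : Finset ℕ}
    (hd : Disjoint Γ₁ Γ₂) (x y : XX) :
    μ (cylOf Γ₁ x ∩ cylOf Γ₂ y) = μ (cylOf Γ₁ x) * μ (cylOf Γ₂ y) := by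
  classical
  set z : XX := fun i => if i ∈ Γ₁ then x i else y i
  have h₁ : cylOf Γ₁ x = cylOf Γ₁ z := cylOf_congr fun i hi => by simp [z, hi]
  have h₂ : cylOf Γ₂ y = cylOf Γ₂ z :=
    cylOf_congr fun i hi => by simp [z, Finset.disjoint_right.1 hd hi]
  have hu : cylOf Γ₁ z ∩ cylOf Γ₂ z = cylOf (Γ₁ ∪ Γ₂) z := by
    ext; simp only [Set.mem_inter_iff, mem_cylOf, Finset.mem_union, or_imp, forall_and]
  rw [h₁, h₂, hu, measure_cylOf hμ, measure_cylOf hμ, measure_cylOf hμ, Finset.prod_union hd]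

def replaceBelow (n : ℕ) (y z : XX) : XX := fun i => if i < n then y i else z i

lemma measurable_replaceBelow (n : ℕ) (y : XX) : Measurable (replaceBelow n y) := by
  refine measurable_pi_lambda _ fun i => ?_
  by_cases h : i < n
  · simp only [replaceBelow, if_pos h, measurable_const]
  · simpa only [replaceBelow, if_neg h] using measurable_pi_apply i

lemma replaceBelow_mem_cylOf (n : ℕ) (y z : XX) : replaceBelow n y z ∈ cylOf (range n) y :=
  fun _ hi => if_pos (Finset.mem_range.1 hi)

lemma replaceBelow_of_mem_cylOf {n : ℕ} {y z : XX} (hz : z ∈ cylOf (range n) y) :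
    replaceBelow n y z = z :=
  funext fun i => by
    unfold replaceBelow
    split_ifs with h
    exacts [(hz i (Finset.mem_range.2 h)).symm, rfl]

lemma preimage_replaceBelow_cylOf {n : ℕ} {y z : XX} {Γ : Finset ℕ}
    (hz : ∀ i ∈ Γ, i < n → z i = y i) :
    replaceBelow n y ⁻¹' cylOf Γ z = cylOf (Γ.filter (n ≤ ·)) z := by
  ext w
  simp only [Set.mem_preimage, mem_cylOf, replaceBelow, Finset.mem_filter, and_imp]
  refine forall₂_congr fun i hi => ?_
  by_cases h : i < n
  · simp [h, hz i hi h]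
  · simp [h, not_lt.1 h]

/-- Events that do not depend on the first `n` coordinates are independent of the
level-`n` cylinders. -/
lemma measure_preimage_replaceBelow_inter (hμ : IsProductMeasure μ) (n : ℕ) (x y : XX)
    {C : Set XX} (hC : MeasurableSet C) :
    μ (replaceBelow n y ⁻¹' C ∩ cylOf (range n) x)
      = μ (replaceBelow n y ⁻¹' C) * μ (cylOf (range n) x) := by
  have := isProbabilityMeasure hμ
  have hm := measurable_replaceBelow n y
  have key : (μ.restrict (cylOf (range n) x)).map (replaceBelow n y)
      = μ (cylOf (range n) x) • μ.map (replaceBelow n y) := by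
    refine ext_of_cylPt fun Γ c => ?_
    have hc := measurableSet_cylPt Γ c
    rw [Measure.map_apply hm hc, Measure.restrict_apply (hm hc), Measure.smul_apply,
      Measure.map_apply hm hc, smul_eq_mul]
    rcases (replaceBelow n y ⁻¹' cylPt Γ c).eq_empty_or_nonempty with h | ⟨w, hw⟩
    · simp [h]
    · rw [cylPt_eq_cylOf_of_mem hw,
        preimage_replaceBelow_cylOf (z := replaceBelow n y w) fun i _ hi => if_pos hi,
        measure_cylOf_inter_of_disjoint hμ, mul_comm]
      exact Finset.disjoint_left.2 fun i hi hi' =>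
        (Finset.mem_range.1 hi').not_ge (Finset.mem_filter.1 hi).2
  have hC' := congrArg (· C) key
  simp only [Measure.map_apply hm hC, Measure.restrict_apply (hm hC), Measure.smul_apply,
    smul_eq_mul] at hC'
  rw [hC', mul_comm]

def parity (n : ℕ) (x : XX) : ℕ := (∑ i ∈ range n, par i (x i)) % 2

lemma parity_lt_two (n : ℕ) (x : XX) : parity n x < 2 := Nat.mod_lt _ two_pos

lemma parity_eq_of_mem_cylOf {n : ℕ} {x z : XX} (hz : z ∈ cylOf (range n) x) :
    parity n z = parity n x := by
  unfold parity
  rw [Finset.sum_congr rfl fun i hi => by rw [hz i hi]]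

lemma rrel_replaceBelow {n : ℕ} (hn : 1 ≤ n) {y z : XX} (h : parity n z = parity n y) :
    Rrel z (replaceBelow n y z) :=
  ⟨n, hn, fun _ hi => (if_neg (not_lt.2 hi)).symm,
    h.trans (parity_eq_of_mem_cylOf (replaceBelow_mem_cylOf n y z)).symm⟩

/-- Overwriting the first `n` coordinates by those of `y` keeps a point of `A` in the cylinder of
`x` inside `A` (the parities agree), and carries `μ` on the cylinder of `x` to `μ` on that of `y`
up to the ratio of their masses. -/
lemma measure_inter_cylOf_mul_le (hμ : IsProductMeasure μ) {A : Set XX}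
    (hA : MeasurableSet A) (hinv : ∀ x ∈ A, ∀ y : XX, Rrel x y → y ∈ A)
    {n : ℕ} (hn : 1 ≤ n) {x y : XX} (hp : parity n x = parity n y) :
    μ (A ∩ cylOf (range n) x) * μ (cylOf (range n) y)
      ≤ μ (A ∩ cylOf (range n) y) * μ (cylOf (range n) x) := by
  set T := replaceBelow n y ⁻¹' A
  have hsub : A ∩ cylOf (range n) x ⊆ T ∩ cylOf (range n) x :=
    fun z ⟨hzA, hzx⟩ =>
      ⟨hinv z hzA _ (rrel_replaceBelow hn ((parity_eq_of_mem_cylOf hzx).trans hp)), hzx⟩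
  have heq : T ∩ cylOf (range n) y = A ∩ cylOf (range n) y := by
    ext z
    exact and_congr_left fun hz => by rw [Set.mem_preimage, replaceBelow_of_mem_cylOf hz]
  calc μ (A ∩ cylOf (range n) x) * μ (cylOf (range n) y)
      ≤ μ (T ∩ cylOf (range n) x) * μ (cylOf (range n) y) := by
        gcongr
    _ = μ (T ∩ cylOf (range n) y) * μ (cylOf (range n) x) := by
        rw [measure_preimage_replaceBelow_inter hμ n x y hA,
          measure_preimage_replaceBelow_inter hμ n y y hA, mul_right_comm]
    _ = μ (A ∩ cylOf (range n) y) * μ (cylOf (range n) x) := by rw [heq]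

lemma measure_inter_cylOf_le_of_parity_eq (hμ : IsProductMeasure μ) {A : Set XX}
    (hA : MeasurableSet A) (hinv : ∀ x ∈ A, ∀ y : XX, Rrel x y → y ∈ A)
    {n : ℕ} (hn : 1 ≤ n) {x y : XX} (hp : parity n x = parity n y) {δ : ℝ≥0∞}
    (hy : μ (A ∩ cylOf (range n) y) ≤ δ * μ (cylOf (range n) y)) :
    μ (A ∩ cylOf (range n) x) ≤ δ * μ (cylOf (range n) x) := by
  rw [← ENNReal.mul_le_mul_iff_left (measure_cylOf_ne_zero hμ _ y)
    (measure_cylOf_ne_top hμ _ y)]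
  calc μ (A ∩ cylOf (range n) x) * μ (cylOf (range n) y)
      ≤ μ (A ∩ cylOf (range n) y) * μ (cylOf (range n) x) :=
        measure_inter_cylOf_mul_le hμ hA hinv hn hp
    _ ≤ δ * μ (cylOf (range n) y) * μ (cylOf (range n) x) := by gcongr
    _ = δ * μ (cylOf (range n) x) * μ (cylOf (range n) y) := by ring

lemma cylOf_range_eq_iUnion_update (n : ℕ) (x : XX) :
    cylOf (range n) x
      = ⋃ a : Xc n, cylOf (range (n + 1)) (update x n a) := by
  ext z
  simp only [Set.mem_iUnion, mem_cylOf, Finset.mem_range]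
  constructor
  · intro h
    refine ⟨z n, fun i hi => ?_⟩
    rcases Nat.lt_succ_iff_lt_or_eq.1 hi with hi | rfl
    · rw [Function.update_of_ne hi.ne, h i hi]
    · rw [Function.update_self]
  · rintro ⟨a, h⟩ i hi
    rw [h i (hi.trans n.lt_succ_self), Function.update_of_ne hi.ne]

lemma measure_inter_cylOf_eq_sum_update (μ : Measure XX) (n : ℕ) (x : XX) {S : Set XX}
    (hS : MeasurableSet S) :
    μ (S ∩ cylOf (range n) x)
      = ∑ a : Xc n, μ (S ∩ cylOf (range (n + 1)) (update x n a)) := by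
  have hdisj : Pairwise fun a b : Xc n => Disjoint
      (cylOf (range (n + 1)) (update x n a))
      (cylOf (range (n + 1)) (update x n b)) := fun a b hab =>
    Set.disjoint_left.2 fun z hza hzb => hab <| by
      have hn : n ∈ range (n + 1) := Finset.self_mem_range_succ n
      simpa using (hza n hn).symm.trans (hzb n hn)
  rw [cylOf_range_eq_iUnion_update, Set.inter_iUnion, measure_iUnion
      (fun a b hab => (hdisj hab).mono Set.inter_subset_right Set.inter_subset_right)
      fun a => hS.inter (measurableSet_cylOf _ _), tsum_fintype]

lemma measure_cylOf_update (hμ : IsProductMeasure μ) (n : ℕ) (x : XX) (a : Xc n) :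
    μ (cylOf (range (n + 1)) (update x n a))
      = μ (cylOf (range n) x) * w n a := by
  rw [measure_cylOf hμ, measure_cylOf hμ, Finset.prod_range_succ, Function.update_self]
  congr 1
  exact Finset.prod_congr rfl fun i hi => by
    rw [Function.update_of_ne (Finset.mem_range.1 hi).ne]

lemma parity_update (n : ℕ) (x : XX) (a : Xc n) :
    parity (n + 1) (update x n a) = (parity n x + par n a) % 2 := by
  unfold parity
  rw [Finset.sum_range_succ, Function.update_self,
    Finset.sum_congr rfl fun i hi => by rw [Function.update_of_ne (Finset.mem_range.1 hi).ne]]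
  omega

/-- This is where `μ_n(0) = 1/2` enters. -/
lemma sum_w_of_par_eq (n : ℕ) {q : ℕ} (hq : q < 2) :
    ∑ a : Xc n with par n a = q, w n a = 2⁻¹ := by
  interval_cases q
  · have hzero : (Finset.univ.filter fun a : Xc n => par n a = 0) = {0} := by
      ext a; simp [par]
    simp [hzero, w]
  · have hone : (Finset.univ.filter fun a : Xc n => par n a = 1) = Finset.univ.erase 0 := by
      ext a; simp [par]
    have h5 : (5 : ℝ≥0∞) ^ (n + 1) ≠ 0 := pow_ne_zero _ (by norm_num)
    have h5' : (5 : ℝ≥0∞) ^ (n + 1) ≠ ⊤ := ENNReal.pow_ne_top (by norm_num)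
    rw [hone, Finset.sum_congr rfl fun a ha => by rw [w, if_neg (Finset.ne_of_mem_erase ha)],
      Finset.sum_const, Finset.card_erase_of_mem (Finset.mem_univ _), Finset.card_univ,
      Fintype.card_fin, Nat.add_sub_cancel, nsmul_eq_mul, one_div,
      ENNReal.mul_inv (by simp) (by simp), Nat.cast_pow, Nat.cast_ofNat, mul_left_comm,
      ENNReal.mul_inv_cancel h5 h5', mul_one]

lemma exists_par_eq (n : ℕ) {q : ℕ} (hq : q < 2) : ∃ a : Xc n, par n a = q := by
  interval_cases q
  · exact ⟨0, if_pos rfl⟩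
  · exact ⟨1, if_neg fun h => by simpa using Fin.one_eq_zero_iff.1 h⟩

lemma exists_par_eq_measure_inter_update_le (hμ : IsProductMeasure μ) {D : Set XX}
    (hD : MeasurableSet D) {ε : ℝ≥0∞} {n : ℕ} {x : XX} {q : ℕ} (hq : q < 2)
    (h : μ (D ∩ cylOf (range n) x) ≤ ε * μ (cylOf (range n) x)) :
    ∃ a : Xc n, par n a = q ∧
      μ (D ∩ cylOf (range (n + 1)) (update x n a))
        ≤ 2 * ε * μ (cylOf (range (n + 1)) (update x n a)) := by
  by_contra! hbig
  set F := Finset.univ.filter fun a : Xc n => par n a = q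
  have hF : F.Nonempty :=
    let ⟨a, ha⟩ := exists_par_eq n hq
    ⟨a, Finset.mem_filter.2 ⟨Finset.mem_univ a, ha⟩⟩
  have hmass : ∑ a ∈ F, 2 * ε * μ (cylOf (range (n + 1)) (update x n a))
      = ε * μ (cylOf (range n) x) := by
    rw [Finset.sum_congr rfl fun a _ => by rw [measure_cylOf_update hμ, ← mul_assoc],
      ← Finset.mul_sum, sum_w_of_par_eq n hq, mul_right_comm, mul_right_comm 2,
      ENNReal.mul_inv_cancel two_ne_zero ofNat_ne_top, one_mul]
  refine h.not_gt ?_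
  calc ε * μ (cylOf (range n) x)
      = ∑ a ∈ F, 2 * ε * μ (cylOf (range (n + 1)) (update x n a)) := hmass.symm
    _ < ∑ a ∈ F, μ (D ∩ cylOf (range (n + 1)) (update x n a)) :=
        ENNReal.sum_lt_sum_of_nonempty hF fun a ha => hbig a (Finset.mem_filter.1 ha).2
    _ ≤ ∑ a, μ (D ∩ cylOf (range (n + 1)) (update x n a)) :=
        Finset.sum_le_sum_of_subset (Finset.filter_subset _ _)
    _ = μ (D ∩ cylOf (range n) x) := (measure_inter_cylOf_eq_sum_update μ n x hD).symm

lemma mul_measure_le_measure_inter {t D : Set XX} (ht : MeasurableSet t) (hD : MeasurableSet D)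
    {n : ℕ} {ε : ℝ≥0∞} (hsat : ∀ z ∈ t, cylOf (range n) z ⊆ t)
    (h : ∀ x, ε * μ (cylOf (range n) x) ≤ μ (D ∩ cylOf (range n) x)) :
    ε * μ t ≤ μ (D ∩ t) := by
  rw [measure_eq_sum_inter_cylPt μ (range n) ht,
    measure_eq_sum_inter_cylPt μ (range n) (hD.inter ht), Finset.mul_sum]
  refine Finset.sum_le_sum fun c _ => ?_
  rcases (t ∩ cylPt (range n) c).eq_empty_or_nonempty with he | ⟨z, hzt, hzc⟩
  · simp [Set.inter_assoc, he]
  · have hcyl : t ∩ cylPt (range n) c = cylOf (range n) z := by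
      rw [cylPt_eq_cylOf_of_mem hzc]
      exact Set.inter_eq_right.2 (hsat z hzt)
    rw [Set.inter_assoc, hcyl]
    exact h z

/-- Approximate `C` by a cylinder set, which is a union of cylinders of every high level. -/
lemma eventually_exists_measure_compl_inter_cylOf_le (hμ : IsProductMeasure μ) {C : Set XX}
    (hC : MeasurableSet C) (hC0 : μ C ≠ 0) {ε : ℝ≥0∞} (hε : ε ≠ 0) :
    ∀ᶠ n in atTop, ∃ x, μ (Cᶜ ∩ cylOf (range n) x) ≤ ε * μ (cylOf (range n) x) := by
  have := isProbabilityMeasure hμ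
  obtain ⟨d, hd0, hd⟩ := ENNReal.exists_pos_mul_lt (a := ε⁻¹ + 1) (by simp [hε]) hC0
  have hd_top : d ≠ ⊤ := ne_top_of_lt <|
    (le_mul_of_one_le_right' le_add_self).trans_lt (hd.trans_le prob_le_one)
  obtain ⟨t, htcyl, htC⟩ := exists_measure_symmDiff_lt_of_generateFrom_isSetRing (μ := μ)
    isSetRing_measurableCylinders
    ⟨{Set.univ}, Set.countable_singleton _,
      Set.singleton_subset_iff.2 (univ_mem_measurableCylinders Xc), by simp⟩
    generateFrom_measurableCylinders.symm hC hd0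
  obtain ⟨Γ, S, -, rfl⟩ := (mem_measurableCylinders t).1 htcyl
  have ht : MeasurableSet (cylinder Γ S) := (Set.toFinite S).measurableSet.cylinder Γ
  refine eventually_atTop.2 ⟨Γ.sup id + 1, fun n hn => ?_⟩
  by_contra! hbig
  have hsat : ∀ z ∈ cylinder Γ S, cylOf (range n) z ⊆ cylinder Γ S := fun z hz z' hz' => by
    have hres : (fun i : Γ => z' i) = fun i : Γ => z i := funext fun i =>
      hz' i (Finset.mem_range.2 ((Finset.le_sup (f := id) i.2).trans_lt hn))
    change (fun i : Γ => z' i) ∈ S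
    rw [hres]
    exact hz
  have hcompl : μ (Cᶜ ∩ cylinder Γ S) ≤ μ (cylinder Γ S ∆ C) :=
    measure_mono fun z hz => Or.inl ⟨hz.2, hz.1⟩
  have ht_le : μ (cylinder Γ S) ≤ d / ε := by
    rw [ENNReal.le_div_iff_mul_le (Or.inr hd0.ne') (Or.inr hd_top), mul_comm]
    exact ((mul_measure_le_measure_inter ht hC.compl hsat fun x => (hbig x).le).trans
      hcompl).trans htC.le
  refine (hd.trans_le ?_).false
  calc μ C ≤ μ (cylinder Γ S ∪ cylinder Γ S ∆ C) :=
        measure_mono fun z hz => by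
          by_cases h : z ∈ cylinder Γ S
          exacts [Or.inl h, Or.inr (Or.inr ⟨hz, h⟩)]
    _ ≤ μ (cylinder Γ S) + μ (cylinder Γ S ∆ C) := measure_union_le _ _
    _ ≤ d / ε + d := add_le_add ht_le htC.le
    _ = d * (ε⁻¹ + 1) := by rw [div_eq_mul_inv, mul_add, mul_one]

lemma not_measure_inter_le_and_compl_inter_le (hμ : IsProductMeasure μ) {A : Set XX}
    (hA : MeasurableSet A) (Γ : Finset ℕ) (x : XX) {δ : ℝ≥0∞} (hδ : 2 * δ < 1)
    (hin : μ (A ∩ cylOf Γ x) ≤ δ * μ (cylOf Γ x))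
    (hout : μ (Aᶜ ∩ cylOf Γ x) ≤ δ * μ (cylOf Γ x)) : False := by
  refine hδ.not_ge <| (ENNReal.mul_le_mul_iff_left (measure_cylOf_ne_zero hμ Γ x)
    (measure_cylOf_ne_top hμ Γ x)).1 ?_
  calc 1 * μ (cylOf Γ x) = μ (A ∩ cylOf Γ x) + μ (Aᶜ ∩ cylOf Γ x) := by
        rw [one_mul, Set.inter_comm A, Set.inter_comm Aᶜ, ← Set.sdiff_eq,
          measure_inter_add_sdiff _ hA]
    _ ≤ 2 * δ * μ (cylOf Γ x) := by rw [two_mul, add_mul]; gcongr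

end ParityRelation

theorem statement14 (μ : Measure XX) (hμ : IsProductMeasure μ)
    (A : Set XX) (hA : MeasurableSet A)
    (hinv : ∀ x ∈ A, ∀ y : XX, Rrel x y → y ∈ A) :
    μ A = 0 ∨ μ Aᶜ = 0 := by
  open ParityRelation Function in
  by_contra! hpos
  have hε : (8⁻¹ : ℝ≥0∞) ≠ 0 := by simp
  obtain ⟨N, ⟨x, hx⟩, ⟨y, hy⟩⟩ :=
    ((eventually_exists_measure_compl_inter_cylOf_le hμ hA hpos.1 hε).and
      (eventually_exists_measure_compl_inter_cylOf_le hμ hA.compl hpos.2 hε)).exists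
  rw [compl_compl] at hy
  obtain ⟨a, ha, hxa⟩ :=
    exists_par_eq_measure_inter_update_le hμ hA.compl (parity_lt_two N y) hx
  obtain ⟨b, hb, hyb⟩ := exists_par_eq_measure_inter_update_le hμ hA (parity_lt_two N x) hy
  have hpar : parity (N + 1) (update x N a) = parity (N + 1) (update y N b) := by
    rw [parity_update, parity_update, ha, hb, add_comm]
  refine not_measure_inter_le_and_compl_inter_le hμ hA _ _ ?_
    (measure_inter_cylOf_le_of_parity_eq hμ hA hinv N.succ_pos hpar hyb) hxa
  rw [← mul_assoc, ← div_eq_mul_inv, ENNReal.div_lt_iff (by norm_num) (by norm_num)]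
  norm_num
end

section
/- Let (k_n)_{n ≥ 1} be integers with k_n ≥ 2, and for each n let ν_n be a probability measure on {0,1,…,k_n − 1} with ν_n({j}) > 0 for every j. Let ν = ⊗_{n≥1} ν_n be the product measure on Y = ∏_{n≥1} {0,1,…,k_n − 1}. If A ⊆ Y is measurable and invariant under the tail equivalence relation (i.e. whenever x ∈ A and y agrees with x in all but finitely many coordinates, then y ∈ A), then ν(A) = 0 or ν(Y ∖ A) = 0. -/
open MeasureTheory ProbabilityTheory Filter

theorem statement15 (k : ℕ → ℕ) (hk : ∀ n, 2 ≤ k n)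
    (ν : (n : ℕ) → Measure (Fin (k n))) (hprob : ∀ n, IsProbabilityMeasure (ν n))
    (hpos : ∀ (n : ℕ) (j : Fin (k n)), 0 < ν n {j})
    (m : Measure ((n : ℕ) → Fin (k n)))
    (hm : ∀ (Γ : Finset ℕ) (u : (i : Γ) → Fin (k i)),
      m {x | ∀ i : Γ, x i = u i} = ∏ i : Γ, ν i {u i})
    (A : Set ((n : ℕ) → Fin (k n))) (hA : MeasurableSet A)
    (hinv : ∀ x ∈ A, ∀ y, {i : ℕ | x i ≠ y i}.Finite → y ∈ A) :
    m A = 0 ∨ m Aᶜ = 0 := by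
  classical
  have hk0 : ∀ n, 0 < k n := fun n => lt_of_lt_of_le two_pos (hk n)
  set d : (n : ℕ) → Fin (k n) := fun n => ⟨0, hk0 n⟩ with hd
  -- reformulate hm with a globally-defined u
  have hm' : ∀ (Γ : Finset ℕ) (u : ∀ i, Fin (k i)),
      m {x | ∀ i ∈ Γ, x i = u i} = ∏ i ∈ Γ, ν i {u i} := by
    intro Γ u
    have h1 := hm Γ (fun i => u i)
    have h2 : {x : (n : ℕ) → Fin (k n) | ∀ i : Γ, x i = u i}
        = {x : (n : ℕ) → Fin (k n) | ∀ i ∈ Γ, x i = u i} := by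
      ext x; simp [Subtype.forall]
    rw [h2] at h1
    exact h1.trans (Finset.prod_coe_sort Γ (fun i => ν i {u i}))
  -- m is a probability measure
  haveI hmprob : IsProbabilityMeasure m := by
    constructor
    have := hm' ∅ d
    simpa using this
  -- singleton cylinders
  have msingle : ∀ (i : ℕ) (j : Fin (k i)),
      m ((fun x : (n : ℕ) → Fin (k n) => x i) ⁻¹' {j}) = ν i {j} := by
    intro i j
    have h0 := hm' {i} (Function.update d i j)
    have h2 : {x : (n : ℕ) → Fin (k n) | ∀ i' ∈ ({i} : Finset ℕ), x i' = Function.update d i j i'}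
        = (fun x : (n : ℕ) → Fin (k n) => x i) ⁻¹' {j} := by
      ext x; simp [Function.update_self]
    rw [h2, Finset.prod_singleton, Function.update_self] at h0
    exact h0
  -- the coordinate sigma-algebras
  set σ : ℕ → MeasurableSpace ((n : ℕ) → Fin (k n)) :=
    fun i => MeasurableSpace.comap (fun x => x i) inferInstance with hσ
  have h_le : ∀ i, σ i ≤ (inferInstance : MeasurableSpace ((n : ℕ) → Fin (k n))) :=
    fun i => (measurable_pi_apply i).comap_le
  -- pi systems
  set π : ℕ → Set (Set ((n : ℕ) → Fin (k n))) :=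
    fun i => {s | ∃ j : Fin (k i), s = (fun x : (n : ℕ) → Fin (k n) => x i) ⁻¹' {j}} with hπ
  have h_pi : ∀ i, IsPiSystem (π i) := by
    intro i s hs t ht hst
    obtain ⟨j, rfl⟩ := hs
    obtain ⟨j', rfl⟩ := ht
    obtain ⟨x, hx1, hx2⟩ := hst
    simp only [Set.mem_preimage, Set.mem_singleton_iff, Set.mem_inter_iff] at hx1 hx2
    have : j = j' := hx1.symm.trans hx2
    subst this
    exact ⟨j, by simp⟩
  have h_gen : ∀ i, σ i = MeasurableSpace.generateFrom (π i) := by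
    intro i
    apply le_antisymm
    · intro s hs
      obtain ⟨t, -, rfl⟩ := hs
      have : (fun x : (n : ℕ) → Fin (k n) => x i) ⁻¹' t
          = ⋃ j ∈ t, (fun x : (n : ℕ) → Fin (k n) => x i) ⁻¹' {j} := by
        ext x; simp
      rw [this]
      exact MeasurableSet.biUnion t.to_countable
        (fun j _ => MeasurableSpace.measurableSet_generateFrom ⟨j, rfl⟩)
    · apply MeasurableSpace.generateFrom_le
      rintro s ⟨j, rfl⟩
      exact ⟨{j}, measurableSet_singleton j, rfl⟩
  -- independence
  have h_ind : iIndepSets π m := by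
    rw [iIndepSets_iff]
    intro S f hf
    set u : ∀ i, Fin (k i) := fun i =>
      if h : ∃ j : Fin (k i), f i = (fun x : (n : ℕ) → Fin (k n) => x i) ⁻¹' {j}
      then h.choose else d i with hu
    have hfs : ∀ i ∈ S, f i = (fun x : (n : ℕ) → Fin (k n) => x i) ⁻¹' {u i} := by
      intro i hi
      have h := hf i hi
      have hui : u i = h.choose := by rw [hu]; exact dif_pos h
      rw [hui]
      exact h.choose_spec
    have h1 : (⋂ i ∈ S, f i) = {x : (n : ℕ) → Fin (k n) | ∀ i ∈ S, x i = u i} := by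
      ext x
      simp only [Set.mem_iInter, Set.mem_setOf_eq]
      constructor
      · intro h i hi
        have := h i hi
        rw [hfs i hi] at this
        exact this
      · intro h i hi
        rw [hfs i hi]
        exact h i hi
    rw [h1, hm' S u]
    exact Finset.prod_congr rfl fun i hi => by rw [hfs i hi, msingle]
  have hIndep : iIndep σ m := iIndepSets.iIndep h_le π h_pi h_gen h_ind
  -- A is measurable with respect to the tail sigma-algebra
  set c : ℕ → ((n : ℕ) → Fin (k n)) → ((n : ℕ) → Fin (k n)) :=
    fun n x i => if n ≤ i then x i else d i with hc
  have hcfin : ∀ (n : ℕ) (x : (n : ℕ) → Fin (k n)), {i : ℕ | x i ≠ c n x i}.Finite := by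
    intro n x
    apply Set.Finite.subset (Finset.finite_toSet (Finset.range n))
    intro i hi
    simp only [Set.mem_setOf_eq, hc] at hi
    simp only [Finset.coe_range, Set.mem_Iio]
    by_contra h
    exact hi (by rw [if_pos (not_lt.1 h)])
  have hcfin' : ∀ (n : ℕ) (x : (n : ℕ) → Fin (k n)), {i : ℕ | c n x i ≠ x i}.Finite :=
    fun n x => (hcfin n x).subset (fun i hi => Ne.symm hi)
  have hAc : ∀ n, c n ⁻¹' A = A := by
    intro n
    ext x
    constructor
    · intro hx
      exact hinv (c n x) hx x (hcfin' n x)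
    · intro hx
      exact hinv x hx (c n x) (hcfin n x)
  have hAn : ∀ n : ℕ, MeasurableSet[⨆ i, ⨆ _ : n ≤ i, σ i] A := by
    intro n
    have hmeas : Measurable[⨆ i, ⨆ _ : n ≤ i, σ i] (c n) := by
      refine @measurable_pi_lambda _ _ _ (⨆ i, ⨆ _ : n ≤ i, σ i) _ _ (fun j => ?_)
      by_cases h : n ≤ j
      · have he : (fun x : (n : ℕ) → Fin (k n) => c n x j)
            = fun x : (n : ℕ) → Fin (k n) => x j := by
          funext x; simp [hc, if_pos h]
        rw [he]
        exact Measurable.of_comap_le (le_iSup₂ (f := fun i (_ : n ≤ i) => σ i) j h)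
      · have he : (fun x : (n : ℕ) → Fin (k n) => c n x j)
            = fun _ : (n : ℕ) → Fin (k n) => d j := by
          funext x; simp [hc, if_neg h]
        rw [he]
        exact measurable_const
    have := hmeas hA
    rwa [hAc n] at this
  have h_tail : MeasurableSet[limsup σ atTop] A := by
    rw [limsup_eq_iInf_iSup_of_nat]
    exact MeasurableSpace.measurableSet_iInf.2 hAn
  rcases measure_zero_or_one_of_measurableSet_limsup_atTop h_le hIndep h_tail with h | h
  · left; exact h
  · right; exact (prob_compl_eq_zero_iff hA).2 h
end

section
/- Let (b(i))_{i≥1} be positive reals with sup_{i≥1} b(i) = ∞, let (c(i))_{i≥1} be reals, and let 0 < β < 1/2 be such that μ{ x : |c(i) + ∑_{j=1}^{i} a_{μ,j}(x)| ≤ b(i) } ≥ 1 − 2β for every i. Then there exist a strictly increasing sequence (i(k))_{k≥1} of positive integers with b(i(k)) → ∞ as k → ∞, and a finite Borel measure λ on ℝ with λ(ℝ) ≤ 1 and λ([−1,1]) ≥ 1 − 2β, such that for every continuous compactly supported f : ℝ → ℝ, ∫_X f( b(i(k))^{-1}·( c(i(k)) + ∑_{j=1}^{i(k)} a_{μ,j}(x)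 ) ) dμ(x) → ∫_ℝ f dλ as k → ∞. -/
open MeasureTheory ENNReal Filter

/-- The real-valued weight `μ_{n+1}(a)`. -/
noncomputable def wR (n : ℕ) (a : Xc n) : ℝ :=
  if a = 0 then 1 / 2 else 1 / (2 * 5 ^ (n + 1))

/-- The random variable `a_{μ,n+1}(x) = -log μ_{n+1}(x_{n+1})` (Lean index `n`). -/
noncomputable def aMu (n : ℕ) (x : XX) : ℝ := -Real.log (wR n (x n))

/-!
The laws of the normalized sums are pushed forward to the compact space `[-∞, ∞] = EReal`,
where probability measures form a sequentially compact space (Prokhorov). The restriction to `ℝ`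
of a weak limit is the required `λ`: a continuous compactly supported function on `ℝ` extends by
zero to a continuous function on `[-∞, ∞]`, and the portmanteau theorem applied to the closed set
`[-1, 1]` keeps the lower bound `1 - 2β` on its mass.
-/

open Set Function Topology

theorem Topology.IsOpenEmbedding.continuous_extend_zero {α β γ : Type*} [TopologicalSpace α]
    [TopologicalSpace β] [T2Space β] [TopologicalSpace γ] [Zero γ] {e : α → β}
    (he : IsOpenEmbedding e) {f : α → γ} (hf : Continuous f) (hfs : HasCompactSupport f) :
    Continuous (extend e f 0) := by
  refine continuous_of_tsupport fun y hy => ?_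
  obtain ⟨x, -, rfl⟩ := hfs.tsupport_extend_zero_subset he.continuous hy
  rw [← he.continuousAt_iff, extend_comp he.injective]
  exact hf.continuousAt

theorem MeasurableEmbedding.integral_comap {α β E : Type*} [MeasurableSpace α] [MeasurableSpace β]
    [NormedAddCommGroup E] [NormedSpace ℝ E] {e : α → β} (he : MeasurableEmbedding e)
    (μ : Measure β) (f : α → E) :
    ∫ x, f x ∂μ.comap e = ∫ y, extend e f 0 y ∂μ := by
  calc ∫ x, f x ∂μ.comap e = ∫ x, extend e f 0 (e x) ∂μ.comap e := by
        simp only [he.injective.extend_apply]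
    _ = ∫ y in range e, extend e f 0 y ∂μ := by rw [← he.integral_map, he.map_comap]
    _ = ∫ y, extend e f 0 y ∂μ :=
        setIntegral_eq_integral_of_forall_compl_eq_zero fun y hy => by
          simp [extend_apply' _ _ _ fun ⟨x, hx⟩ => hy ⟨x, hx⟩]

theorem exists_strictMono_tendsto_atTop_of_forall_exists_lt {b : ℕ → ℝ}
    (hb : ∀ M : ℝ, ∃ i, 1 ≤ i ∧ M < b i) :
    ∃ g : ℕ → ℕ, StrictMono g ∧ (∀ k, 1 ≤ g k) ∧ Tendsto (b ∘ g) atTop atTop := by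
  have hfreq (n : ℕ) : ∃ᶠ i in atTop, 1 ≤ i ∧ (n : ℝ) < b i := by
    refine frequently_atTop.2 fun a => ?_
    obtain ⟨i, hi1, hi⟩ := hb (n + ∑ j ∈ Finset.range a, |b j|)
    refine ⟨i, not_lt.1 fun hia => ?_, hi1, ?_⟩
    · have := Finset.single_le_sum (fun j _ => abs_nonneg (b j)) (Finset.mem_range.2 hia)
      linarith [le_abs_self (b i), (Nat.cast_nonneg n : (0 : ℝ) ≤ n)]
    · linarith [Finset.sum_nonneg fun j (_ : j ∈ Finset.range a) => abs_nonneg (b j)]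
  obtain ⟨g, hg, hgb⟩ := extraction_forall_of_frequently hfreq
  exact ⟨g, hg, fun k => (hgb k).1,
    tendsto_atTop_mono (fun k => (hgb k).2.le) tendsto_natCast_atTop_atTop⟩

theorem exists_subseq_tendsto_integral_of_hasCompactSupport (ν : ℕ → Measure ℝ)
    [∀ k, IsProbabilityMeasure (ν k)] :
    ∃ φ : ℕ → ℕ, StrictMono φ ∧ ∃ lam : Measure ℝ, lam univ ≤ 1 ∧
      (∀ K : Set ℝ, IsCompact K → limsup (fun k => ν (φ k) K) atTop ≤ lam K) ∧
      ∀ f : ℝ → ℝ, Continuous f → HasCompactSupport f →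
        Tendsto (fun k => ∫ y, f y ∂ν (φ k)) atTop (𝓝 (∫ y, f y ∂lam)) := by
  have he := EReal.measurableEmbedding_coe
  let P : ℕ → ProbabilityMeasure EReal := fun k =>
    ⟨(ν k).map (↑), Measure.isProbabilityMeasure_map he.measurable.aemeasurable⟩
  obtain ⟨P', φ, hφ, hP⟩ := CompactSpace.tendsto_subseq P
  have hP_apply (k : ℕ) (s : Set ℝ) : (P k : Measure EReal) ((↑) '' s) = ν k s := by
    simp only [P, ProbabilityMeasure.coe_mk, he.map_apply, preimage_image_eq _ he.injective]
  refine ⟨φ, hφ, (P' : Measure EReal).comap (↑), ?_, fun K hK => ?_, fun f hf hfs => ?_⟩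
  · rw [he.comap_apply]
    exact prob_le_one
  · rw [he.comap_apply]
    simpa only [Function.comp_apply, hP_apply] using
      ProbabilityMeasure.limsup_measure_closed_le_of_tendsto hP
        (hK.image continuous_coe_real_ereal).isClosed
  · let F : BoundedContinuousFunction EReal ℝ := .mkOfCompact
      ⟨extend (↑) f 0, EReal.isOpenEmbedding_coe.continuous_extend_zero hf hfs⟩
    have := (ProbabilityMeasure.tendsto_iff_forall_integral_tendsto.1 hP) F
    rw [he.integral_comap]
    refine this.congr fun k => ?_
    change ∫ y, Function.extend Real.toEReal f 0 y ∂(ν (φ k)).map Real.toEReal = _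
    simp only [he.integral_map, he.injective.extend_apply]

theorem IsProductMeasure.isProbabilityMeasure_s18 {μ : Measure XX} (hμ : IsProductMeasure μ) :
    IsProbabilityMeasure μ := by
  have : IsEmpty (∅ : Finset ℕ) := Finset.isEmpty_coe_sort.2 rfl
  have hcyl : cylPt ∅ isEmptyElim = univ :=
    eq_univ_of_forall fun x => Subsingleton.elim (fun i : (∅ : Finset ℕ) => x i) isEmptyElim
  constructor
  simpa [hcyl] using hμ ∅ isEmptyElim

theorem measurable_aMu (n : ℕ) : Measurable (aMu n) :=
  (measurable_from_top (f := fun a : Xc n => -Real.log (wR n a))).comp (measurable_pi_apply n)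

theorem inv_mul_mem_Icc_iff_abs_le {b s : ℝ} (hb : 0 < b) :
    b⁻¹ * s ∈ Icc (-1 : ℝ) 1 ↔ |s| ≤ b := by
  rw [mem_Icc, ← abs_le, abs_mul, abs_inv, abs_of_pos hb, inv_mul_le_iff₀ hb, mul_one]

theorem statement18_general (μ : Measure XX) (hμ : IsProductMeasure μ)
    (b c : ℕ → ℝ) (hbpos : ∀ i, 1 ≤ i → 0 < b i)
    (hbsup : ∀ M : ℝ, ∃ i, 1 ≤ i ∧ M < b i)
    (β : ℝ)
    (h : ∀ i, 1 ≤ i → ENNReal.ofReal (1 - 2 * β) ≤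
      μ {x | |c i + ∑ j ∈ Finset.range i, aMu j x| ≤ b i}) :
    ∃ idx : ℕ → ℕ, StrictMono idx ∧ (∀ k, 1 ≤ idx k) ∧
      Filter.Tendsto (fun k => b (idx k)) Filter.atTop Filter.atTop ∧
      ∃ lam : Measure ℝ, IsFiniteMeasure lam ∧ lam Set.univ ≤ 1 ∧
        ENNReal.ofReal (1 - 2 * β) ≤ lam (Set.Icc (-1 : ℝ) 1) ∧
        ∀ f : ℝ → ℝ, Continuous f → HasCompactSupport f →
          Filter.Tendsto
            (fun k => ∫ x,
              f ((b (idx k))⁻¹ * (c (idx k) + ∑ j ∈ Finset.range (idx k), aMu j x)) ∂μ)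
            Filter.atTop (nhds (∫ y, f y ∂lam)) := by
  have := hμ.isProbabilityMeasure_s18
  obtain ⟨g, hg, hg1, hgb⟩ := exists_strictMono_tendsto_atTop_of_forall_exists_lt hbsup
  set S : ℕ → XX → ℝ := fun i x => (b i)⁻¹ * (c i + ∑ j ∈ Finset.range i, aMu j x)
  have hS (i : ℕ) : Measurable (S i) :=
    (measurable_const.add (Finset.measurable_sum _ fun j _ => measurable_aMu j)).const_mul _
  have (k : ℕ) : IsProbabilityMeasure (μ.map (S (g k))) :=
    Measure.isProbabilityMeasure_map (hS _).aemeasurable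
  obtain ⟨φ, hφ, lam, hlam1, hlamK, hlim⟩ :=
    exists_subseq_tendsto_integral_of_hasCompactSupport fun k => μ.map (S (g k))
  refine ⟨g ∘ φ, hg.comp hφ, fun k => hg1 _, hgb.comp hφ.tendsto_atTop, lam,
    ⟨hlam1.trans_lt one_lt_top⟩, hlam1, ?_, fun f hf hfs => ?_⟩
  · refine le_trans (le_limsup_of_frequently_le' (Frequently.of_forall fun k => ?_))
      (hlamK _ isCompact_Icc)
    rw [Measure.map_apply (hS _) measurableSet_Icc]
    refine (h _ (hg1 (φ k))).trans_eq (congrArg μ ?_)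
    exact Set.ext fun x => (inv_mul_mem_Icc_iff_abs_le (hbpos _ (hg1 _))).symm
  · exact (hlim f hf hfs).congr fun k => integral_map (hS _).aemeasurable hf.aestronglyMeasurable

theorem statement18 (μ : Measure XX) (hμ : IsProductMeasure μ)
    (b c : ℕ → ℝ) (hbpos : ∀ i, 1 ≤ i → 0 < b i)
    (hbsup : ∀ M : ℝ, ∃ i, 1 ≤ i ∧ M < b i)
    (β : ℝ) (hβ0 : 0 < β) (hβ : β < 1 / 2)
    (h : ∀ i, 1 ≤ i → ENNReal.ofReal (1 - 2 * β) ≤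
      μ {x | |c i + ∑ j ∈ Finset.range i, aMu j x| ≤ b i}) :
    ∃ idx : ℕ → ℕ, StrictMono idx ∧ (∀ k, 1 ≤ idx k) ∧
      Filter.Tendsto (fun k => b (idx k)) Filter.atTop Filter.atTop ∧
      ∃ lam : Measure ℝ, IsFiniteMeasure lam ∧ lam Set.univ ≤ 1 ∧
        ENNReal.ofReal (1 - 2 * β) ≤ lam (Set.Icc (-1 : ℝ) 1) ∧
        ∀ f : ℝ → ℝ, Continuous f → HasCompactSupport f →
          Filter.Tendsto
            (fun k => ∫ x,
              f ((b (idx k))⁻¹ * (c (idx k) + ∑ j ∈ Finset.range (idx k), aMu j x)) ∂μ)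
            Filter.atTop (nhds (∫ y, f y ∂lam)) :=
  statement18_general μ hμ b c hbpos hbsup β h
end
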